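/- arXiv:1701.05102 — 3 statements merged into one kernel-verified Lean document; each statement's English description precedes it below -/
import Mathlib

section
/- Let a, b, c, d be positive integers. The pair (X, Oz) associated to the complex surface V = {(x,y,z) ∈ ℂ³ : y^a = z^b·x^c + x^d} is Whitney (a)-regular at the origin if and only if a = 1, or d ≤ c, or (c < d < b + c and (a ≤ b or d·(a − b) < a·c)). -/
open Filter

noncomputable section

/-- x-partial derivative of f(x,y,z) = y^a - z^b*x^c - x^d. -/
def fxC (b c d : ℕ) (x z : ℂ) : ℂ :=
  -(c : ℂ) * z ^ b * x ^ (c - 1) - (d : ℂ) * x ^ (d - 1)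

/-- y-partial derivative of f. -/
def fyC (a : ℕ) (y : ℂ) : ℂ := (a : ℂ) * y ^ (a - 1)

/-- z-partial derivative of f. -/
def fzC (b c : ℕ) (x z : ℂ) : ℂ := -(b : ℂ) * z ^ (b - 1) * x ^ c

/-- Hermitian norm on ℂ³. -/
def nrm3C (u v w : ℂ) : ℝ := Real.sqrt (‖u‖ ^ 2 + ‖v‖ ^ 2 + ‖w‖ ^ 2)

/-- Hermitian norm on ℂ². -/
def nrm2C (u v : ℂ) : ℝ := Real.sqrt (‖u‖ ^ 2 + ‖v‖ ^ 2)

/-- Norm of the gradient ∇f(x,y,z). -/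
def gradNormC (a b c d : ℕ) (x y z : ℂ) : ℝ :=
  nrm3C (fxC b c d x z) (fyC a y) (fzC b c x z)

/-- The gradient ∇f(x,y,z) is nonzero. -/
def gradNeC (a b c d : ℕ) (x y z : ℂ) : Prop :=
  ¬ (fxC b c d x z = 0 ∧ fyC a y = 0 ∧ fzC b c x z = 0)

/-- Membership in X = V \ Oz, where V = {y^a = z^b x^c + x^d} and Oz is the z-axis. -/
def inXC (a b c d : ℕ) (x y z : ℂ) : Prop :=
  y ^ a = z ^ b * x ^ c + x ^ d ∧ ¬ (x = 0 ∧ y = 0)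

/-- Whitney (a)-regularity of the pair (X, Oz) at the origin. -/
def aRegC (a b c d : ℕ) : Prop :=
  ∀ x y z : ℕ → ℂ,
    (∀ n, inXC a b c d (x n) (y n) (z n)) →
    Tendsto (fun n => (x n, y n, z n)) atTop (nhds ((0 : ℂ), (0 : ℂ), (0 : ℂ))) →
    (∀ n, gradNeC a b c d (x n) (y n) (z n)) →
    Tendsto (fun n => ‖fzC b c (x n) (z n)‖ / gradNormC a b c d (x n) (y n) (z n))
      atTop (nhds 0)

/-- The (bᵖⁱ) condition for the retraction π(x,y,z) = (0,0,z). -/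
def bpiC (a b c d : ℕ) : Prop :=
  ∀ x y z : ℕ → ℂ,
    (∀ n, inXC a b c d (x n) (y n) (z n)) →
    Tendsto (fun n => (x n, y n, z n)) atTop (nhds ((0 : ℂ), (0 : ℂ), (0 : ℂ))) →
    (∀ n, gradNeC a b c d (x n) (y n) (z n)) →
    Tendsto (fun n => ‖x n * fxC b c d (x n) (z n) + y n * fyC a (y n)‖ /
        (nrm2C (x n) (y n) * gradNormC a b c d (x n) (y n) (z n)))
      atTop (nhds 0)

/-- Whitney (b)-regularity of the pair (X, Oz) at the origin. -/
def bRegC (a b c d : ℕ) : Prop := aRegC a b c d ∧ bpiC a b c d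

/-- Kuo–Verdier (w)-regularity of the pair (X, Oz) at the origin. -/
def wRegC (a b c d : ℕ) : Prop :=
  ∃ C : ℝ, 0 < C ∧ ∃ ε : ℝ, 0 < ε ∧ ∀ x y z : ℂ,
    inXC a b c d x y z → nrm3C x y z < ε → gradNeC a b c d x y z →
    ‖fzC b c x z‖ ≤ C * nrm2C x y * gradNormC a b c d x y z

/-!
Put `d = c + e`, `u = z ^ b`, `v = x ^ e`. The Euler identities `x f_x = -(c z^b x^c + d x^d)`,
`y f_y = a y^a`, `z f_z = -b z^b x^c` give `x f_x = -x^c (c u + d v)` and, on `V`,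
`y^a = x^c (u + v)`. As `(u, v) ↦ (c u + d v, u + v)` is invertible, at each point either
`|c u + d v| ≳ |u| + |v|`, and then `(|f_z| / |f_x|)^b ≲ |x|^(b-e)`, or `|u| ≲ |v| ≲ |u + v|`, and
then `(|f_z| / |f_y|)^(ab) ≲ |x|^(bd-ae)`; so (a) holds when `e < b` and `ae < bd`. For `d ≤ c`,
`f_x` and `f_z` share the factor `x^(d-1)`, with cofactors tending to `-d` and `0`; for `a = 1`,
`f_y = 1`.

Conversely, along `(t^b, 0, ζ t^e)` with `ζ^b = -1` (when `b ≤ e`, `a ≥ 2`) and along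
`(t^(ab), μ t^(bd), η t^(ae))` with `c η^b = -d`, `c μ^a = -e`, on which `f_x = 0` (when `bd ≤ ae`),
the Euler identities show `|f_x| + |f_y| ≲ |f_z|`, so `|f_z| / ‖∇f‖` stays away from `0`.
-/

open Topology

def fzRatio (a b c d : ℕ) (x y z : ℂ) : ℝ :=
  ‖fzC b c x z‖ / gradNormC a b c d x y z

section

variable {a b c d : ℕ} {x y z : ℂ}

theorem mul_fxC (hc : c ≠ 0) (hd : d ≠ 0) :
    x * fxC b c d x z = -(c * z ^ b * x ^ c + d * x ^ d) := by
  obtain ⟨c, rfl⟩ := Nat.exists_eq_add_one_of_ne_zero hc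
  obtain ⟨d, rfl⟩ := Nat.exists_eq_add_one_of_ne_zero hd
  simp only [fxC, Nat.add_sub_cancel]
  push_cast
  ring

theorem mul_fyC (ha : a ≠ 0) : y * fyC a y = a * y ^ a := by
  obtain ⟨a, rfl⟩ := Nat.exists_eq_add_one_of_ne_zero ha
  simp only [fyC, Nat.add_sub_cancel]
  ring

theorem mul_fzC (hb : b ≠ 0) : z * fzC b c x z = -(b * z ^ b * x ^ c) := by
  obtain ⟨b, rfl⟩ := Nat.exists_eq_add_one_of_ne_zero hb
  simp only [fzC, Nat.add_sub_cancel]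
  ring

theorem norm_fyC : ‖fyC a y‖ = a * ‖y‖ ^ (a - 1) := by
  simp [fyC]

theorem norm_fzC : ‖fzC b c x z‖ = b * ‖z‖ ^ (b - 1) * ‖x‖ ^ c := by
  simp [fzC]

theorem norm_le_nrm3C_fst (u v w : ℂ) : ‖u‖ ≤ nrm3C u v w :=
  Real.le_sqrt_of_sq_le (by nlinarith [sq_nonneg ‖v‖, sq_nonneg ‖w‖])

theorem norm_le_nrm3C_snd (u v w : ℂ) : ‖v‖ ≤ nrm3C u v w :=
  Real.le_sqrt_of_sq_le (by nlinarith [sq_nonneg ‖u‖, sq_nonneg ‖w‖])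

theorem norm_le_nrm3C_thd (u v w : ℂ) : ‖w‖ ≤ nrm3C u v w :=
  Real.le_sqrt_of_sq_le (by nlinarith [sq_nonneg ‖u‖, sq_nonneg ‖v‖])

theorem nrm3C_le_add (u v w : ℂ) : nrm3C u v w ≤ ‖u‖ + ‖v‖ + ‖w‖ :=
  Real.sqrt_le_iff.2 ⟨by positivity, by
    nlinarith [mul_nonneg (norm_nonneg u) (norm_nonneg v),
      mul_nonneg (norm_nonneg u) (norm_nonneg w), mul_nonneg (norm_nonneg v) (norm_nonneg w)]⟩

theorem gradNormC_nonneg : 0 ≤ gradNormC a b c d x y z := Real.sqrt_nonneg _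

theorem fzRatio_nonneg : 0 ≤ fzRatio a b c d x y z :=
  div_nonneg (norm_nonneg _) gradNormC_nonneg

theorem fzRatio_le_one : fzRatio a b c d x y z ≤ 1 :=
  div_le_one_of_le₀ (norm_le_nrm3C_thd _ _ _) gradNormC_nonneg

theorem fzRatio_mul_le {A : ℝ} (hA : A ≤ gradNormC a b c d x y z) :
    fzRatio a b c d x y z * A ≤ ‖fzC b c x z‖ := by
  rcases (gradNormC_nonneg : 0 ≤ gradNormC a b c d x y z).eq_or_lt with h | h
  · simp [fzRatio, ← h]
  · calc fzRatio a b c d x y z * A ≤ fzRatio a b c d x y z * gradNormC a b c d x y z :=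
          mul_le_mul_of_nonneg_left hA fzRatio_nonneg
      _ = ‖fzC b c x z‖ := div_mul_cancel₀ _ h.ne'

variable (a b c d x y z) in
theorem fzRatio_mul_norm_fxC_le : fzRatio a b c d x y z * ‖fxC b c d x z‖ ≤ ‖fzC b c x z‖ :=
  fzRatio_mul_le (norm_le_nrm3C_fst _ _ _)

variable (a b c d x y z) in
theorem fzRatio_mul_norm_fyC_le : fzRatio a b c d x y z * ‖fyC a y‖ ≤ ‖fzC b c x z‖ :=
  fzRatio_mul_le (norm_le_nrm3C_snd _ _ _)

theorem inv_add_one_le_fzRatio {C : ℝ} (hfz : fzC b c x z ≠ 0)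
    (hC : ‖fxC b c d x z‖ + ‖fyC a y‖ ≤ C * ‖fzC b c x z‖) :
    (C + 1)⁻¹ ≤ fzRatio a b c d x y z := by
  have hfz : 0 < ‖fzC b c x z‖ := norm_pos_iff.2 hfz
  have hgrad : 0 < gradNormC a b c d x y z := hfz.trans_le (norm_le_nrm3C_thd _ _ _)
  have hle : gradNormC a b c d x y z ≤ (C + 1) * ‖fzC b c x z‖ :=
    (nrm3C_le_add _ _ _).trans (by linarith)
  rw [fzRatio, le_div_iff₀ hgrad, inv_mul_le_iff₀ (pos_of_mul_pos_left (hgrad.trans_le hle) hfz.le)]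
  exact hle

theorem inXC.x_ne_zero (hc : 0 < c) (hd : 0 < d) (h : inXC a b c d x y z) : x ≠ 0 := by
  rintro rfl
  refine h.2 ⟨rfl, ?_⟩
  have : y ^ a = 0 := by simp [h.1, hc.ne', hd.ne']
  exact (pow_eq_zero_iff'.1 this).1

end

theorem tendsto_nhds_zero_of_pow_le {α : Type*} {l : Filter α} {r g : α → ℝ} {N : ℕ}
    (hN : N ≠ 0) (hr : ∀ᶠ i in l, 0 ≤ r i) (hg : Tendsto g l (𝓝 0))
    (h : ∀ᶠ i in l, r i ^ N ≤ g i) : Tendsto r l (𝓝 0) := by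
  refine tendsto_order.2 ⟨fun ε hε => hr.mono fun i hi => hε.trans_le hi, fun ε hε => ?_⟩
  filter_upwards [hr, h, hg.eventually (gt_mem_nhds (pow_pos hε N))] with i h0 h1 h2
  exact (pow_lt_pow_iff_left₀ h0 hε.le hN).1 (h1.trans_lt h2)

theorem aRegC_one {b c d : ℕ} (hc : 0 < c) : aRegC 1 b c d := by
  intro x y z _ hlim _
  change Tendsto (fun n => fzRatio 1 b c d (x n) (y n) (z n)) atTop (𝓝 0)
  have hfz : Tendsto (fun n => ‖fzC b c (x n) (z n)‖) atTop (𝓝 0) := by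
    have : Continuous fun p : ℂ × ℂ × ℂ => ‖fzC b c p.1 p.2.2‖ := by unfold fzC; fun_prop
    simpa [fzC, hc.ne', Function.comp_def] using (this.tendsto _).comp hlim
  refine squeeze_zero (fun n => fzRatio_nonneg) (fun n => ?_) hfz
  simpa [fyC] using fzRatio_mul_norm_fyC_le 1 b c d (x n) (y n) (z n)

theorem fzRatio_mul_le_of_le {a b c d : ℕ} {x y z : ℂ} (hd : 0 < d) (hdc : d ≤ c)
    (h : inXC a b c d x y z) :
    fzRatio a b c d x y z * ‖c * z ^ b * x ^ (c - d) + d‖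
      ≤ ‖b * z ^ (b - 1) * x ^ (c - d + 1)‖ := by
  have hx : x ≠ 0 := h.x_ne_zero (by omega) hd
  have hfx : fxC b c d x z = -(x ^ (d - 1) * (c * z ^ b * x ^ (c - d) + d)) := by
    rw [fxC, show c - 1 = d - 1 + (c - d) by omega, pow_add]; ring
  have hfz : fzC b c x z = -(x ^ (d - 1) * (b * z ^ (b - 1) * x ^ (c - d + 1))) := by
    rw [fzC, show x ^ c = x ^ (d - 1) * x ^ (c - d + 1) by rw [← pow_add]; congr 1; omega]; ring
  have key := fzRatio_mul_norm_fxC_le a b c d x y z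
  rw [hfx, hfz, norm_neg, norm_neg, norm_mul, norm_mul, mul_left_comm] at key
  exact le_of_mul_le_mul_left key (norm_pos_iff.2 (pow_ne_zero _ hx))

theorem aRegC_of_le {a b c d : ℕ} (hb : 0 < b) (hd : 0 < d) (hdc : d ≤ c) : aRegC a b c d := by
  intro x y z hX hlim _
  change Tendsto (fun n => fzRatio a b c d (x n) (y n) (z n)) atTop (𝓝 0)
  let g₁ : ℂ × ℂ × ℂ → ℝ := fun p => ‖b * p.2.2 ^ (b - 1) * p.1 ^ (c - d + 1)‖
  let g₂ : ℂ × ℂ × ℂ → ℝ := fun p => ‖c * p.2.2 ^ b * p.1 ^ (c - d) + d‖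
  have h₁ : Tendsto (fun n => g₁ (x n, y n, z n)) atTop (𝓝 0) := by
    have : Continuous g₁ := by fun_prop
    simpa [g₁, Function.comp_def] using (this.tendsto 0).comp hlim
  have h₂ : Tendsto (fun n => g₂ (x n, y n, z n)) atTop (𝓝 d) := by
    have : Continuous g₂ := by fun_prop
    simpa [g₂, Function.comp_def, hb.ne'] using (this.tendsto 0).comp hlim
  refine squeeze_zero' (Eventually.of_forall fun n => fzRatio_nonneg) ?_
    (by simpa using h₁.div h₂ (by positivity))
  filter_upwards [h₂.eventually (lt_mem_nhds (show (0 : ℝ) < d by positivity))] with n hn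
  exact (le_div_iff₀ hn).2 (fzRatio_mul_le_of_le hd hdc (hX n))

theorem exists_norm_smul_add_smul_dichotomy {E : Type*} [SeminormedAddCommGroup E]
    [NormedSpace ℝ E] {c d : ℝ} (hc : 0 < c) (hcd : c < d) :
    ∃ ε > 0, ∃ K > 0, ∃ δ > 0, ∀ u v : E,
      ε * (‖u‖ + ‖v‖) ≤ ‖c • u + d • v‖ ∨ (‖u‖ ≤ K * ‖v‖ ∧ δ * ‖v‖ ≤ ‖u + v‖) := by
  obtain ⟨e, he, rfl⟩ : ∃ e, 0 < e ∧ d = c + e := ⟨d - c, by linarith, by ring⟩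
  set ε := e * c / (4 * (2 * c + e))
  set K := (3 * c + 2 * e) / c
  have hε : ε ≤ c / 2 := by
    rw [div_le_div_iff₀ (by positivity) (by positivity)]; nlinarith
  have hεK : ε * (K + 1) = e / 2 := by
    simp only [ε, K]; field_simp; ring
  refine ⟨ε, by positivity, K, by positivity, e / (2 * c), by positivity, fun u v => ?_⟩
  have h₁ : c * ‖u‖ ≤ ‖c • u + (c + e) • v‖ + (c + e) * ‖v‖ := by
    have := norm_sub_le (c • u + (c + e) • v) ((c + e) • v)
    rwa [add_sub_cancel_right, norm_smul, norm_smul, Real.norm_of_nonneg hc.le,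
      Real.norm_of_nonneg (by positivity)] at this
  have h₂ : e * ‖v‖ ≤ ‖c • u + (c + e) • v‖ + c * ‖u + v‖ := by
    have := norm_sub_le (c • u + (c + e) • v) (c • (u + v))
    rwa [show c • u + (c + e) • v - c • (u + v) = e • v by rw [smul_add, add_smul]; abel,
      norm_smul, norm_smul, Real.norm_of_nonneg he.le, Real.norm_of_nonneg hc.le] at this
  refine (le_or_gt (ε * (‖u‖ + ‖v‖)) ‖c • u + (c + e) • v‖).imp id fun h => ?_
  have hK : ‖u‖ ≤ K * ‖v‖ := by
    rw [div_mul_eq_mul_div, le_div_iff₀ hc]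
    nlinarith [mul_le_mul_of_nonneg_right hε (norm_nonneg u),
      mul_le_mul_of_nonneg_right hε (norm_nonneg v)]
  refine ⟨hK, ?_⟩
  have : ε * (‖u‖ + ‖v‖) ≤ e / 2 * ‖v‖ := by
    rw [← hεK, mul_assoc]
    exact mul_le_mul_of_nonneg_left (by linarith) (by positivity)
  rw [div_mul_eq_mul_div, div_le_iff₀ (by positivity)]
  linarith

theorem pow_le_of_mul_add_pow_le {r X Z : ℝ} {b e : ℕ} (hb : b ≠ 0) (heb : e ≤ b)
    (hr : 0 ≤ r) (hX : 0 < X) (hZ : 0 ≤ Z) (h : r * (Z ^ b + X ^ e) ≤ b * Z ^ (b - 1) * X) :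
    r ^ b ≤ b ^ b * X ^ (b - e) := by
  set S := Z ^ b + X ^ e
  have hS : 0 < S := by positivity
  have hZS : (Z ^ (b - 1)) ^ b ≤ S ^ (b - 1) := by
    rw [← pow_mul, mul_comm, pow_mul]
    exact pow_le_pow_left₀ (by positivity) (le_add_of_nonneg_right (by positivity)) _
  have hXS : X ^ b ≤ X ^ (b - e) * S := by
    rw [← pow_sub_mul_pow X heb]
    exact mul_le_mul_of_nonneg_left (le_add_of_nonneg_left (by positivity)) (by positivity)
  refine le_of_mul_le_mul_right ?_ (pow_pos hS b)
  calc r ^ b * S ^ b = (r * S) ^ b := (mul_pow _ _ _).symm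
    _ ≤ (b * Z ^ (b - 1) * X) ^ b := pow_le_pow_left₀ (by positivity) h b
    _ = b ^ b * (Z ^ (b - 1)) ^ b * X ^ b := by ring
    _ ≤ b ^ b * S ^ (b - 1) * (X ^ (b - e) * S) := by gcongr
    _ = b ^ b * X ^ (b - e) * S ^ b := by rw [← pow_sub_one_mul hb S]; ring

theorem pow_le_of_mul_pow_le {r X Y Z K δ : ℝ} {a b c e m : ℕ} (ha : a ≠ 0) (hb : b ≠ 0)
    (hr : 0 ≤ r) (hX : 0 < X) (hY : 0 ≤ Y) (hZ : 0 ≤ Z) (hδ : 0 ≤ δ) (hZK : Z ^ b ≤ K * X ^ e)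
    (hYX : δ * X ^ (c + e) ≤ Y ^ a) (h : r * (a * Y ^ (a - 1)) ≤ b * Z ^ (b - 1) * X ^ c)
    (hm : a * e + m = b * (c + e)) :
    r ^ (a * b) * (a ^ (a * b) * δ ^ ((a - 1) * b)) ≤ b ^ (a * b) * K ^ ((b - 1) * a) * X ^ m := by
  obtain ⟨a, rfl⟩ := Nat.exists_eq_add_one_of_ne_zero ha
  obtain ⟨b, rfl⟩ := Nat.exists_eq_add_one_of_ne_zero hb
  simp only [Nat.add_sub_cancel] at h ⊢
  have hexp : e * (b * (a + 1)) + c * ((a + 1) * (b + 1)) = m + (c + e) * (a * (b + 1)) := by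
    nlinarith [hm]
  refine le_of_mul_le_mul_right ?_ (pow_pos hX ((c + e) * (a * (b + 1))))
  calc r ^ ((a + 1) * (b + 1)) * ((a + 1 : ℕ) ^ ((a + 1) * (b + 1)) * δ ^ (a * (b + 1)))
        * X ^ ((c + e) * (a * (b + 1)))
      = r ^ ((a + 1) * (b + 1)) * (a + 1 : ℕ) ^ ((a + 1) * (b + 1))
        * (δ * X ^ (c + e)) ^ (a * (b + 1)) := by ring
    _ ≤ r ^ ((a + 1) * (b + 1)) * (a + 1 : ℕ) ^ ((a + 1) * (b + 1))
        * (Y ^ (a + 1)) ^ (a * (b + 1)) := by gcongr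
    _ = (r * ((a + 1 : ℕ) * Y ^ a)) ^ ((a + 1) * (b + 1)) := by ring
    _ ≤ ((b + 1 : ℕ) * Z ^ b * X ^ c) ^ ((a + 1) * (b + 1)) :=
        pow_le_pow_left₀ (by positivity) h _
    _ = (b + 1 : ℕ) ^ ((a + 1) * (b + 1)) * (Z ^ (b + 1)) ^ (b * (a + 1))
        * X ^ (c * ((a + 1) * (b + 1))) := by ring
    _ ≤ (b + 1 : ℕ) ^ ((a + 1) * (b + 1)) * (K * X ^ e) ^ (b * (a + 1))
        * X ^ (c * ((a + 1) * (b + 1))) := by gcongr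
    _ = (b + 1 : ℕ) ^ ((a + 1) * (b + 1)) * K ^ (b * (a + 1)) * X ^ m
        * X ^ ((c + e) * (a * (b + 1))) := by
      rw [mul_pow, ← pow_mul, mul_assoc _ (X ^ m), ← pow_add, ← hexp, pow_add]; ring

section

variable {a b c e : ℕ} {x y z : ℂ}

theorem mul_fxC_add (hc : c ≠ 0) :
    x * fxC b c (c + e) x z = -(x ^ c * (c * z ^ b + (c + e : ℕ) * x ^ e)) := by
  rw [mul_fxC hc (by omega), pow_add]; ring

theorem fzRatio_pow_le_of_le_norm {ε : ℝ} (hb : 0 < b) (hc : 0 < c) (heb : e ≤ b) (hε : 0 < ε)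
    (hX : inXC a b c (c + e) x y z)
    (h : ε * (‖z‖ ^ b + ‖x‖ ^ e) ≤ ‖(c : ℂ) * z ^ b + (c + e : ℕ) * x ^ e‖) :
    (ε * fzRatio a b c (c + e) x y z) ^ b ≤ b ^ b * ‖x‖ ^ (b - e) := by
  have hx : 0 < ‖x‖ := norm_pos_iff.2 (hX.x_ne_zero hc (by omega))
  have hfx : ‖x‖ * ‖fxC b c (c + e) x z‖ = ‖x‖ ^ c * ‖(c : ℂ) * z ^ b + (c + e : ℕ) * x ^ e‖ := by
    rw [← norm_mul, mul_fxC_add hc.ne', norm_neg, norm_mul, norm_pow]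
  have key := fzRatio_mul_norm_fxC_le a b c (c + e) x y z
  rw [norm_fzC] at key
  have hR : fzRatio a b c (c + e) x y z * ‖(c : ℂ) * z ^ b + (c + e : ℕ) * x ^ e‖
      ≤ b * ‖z‖ ^ (b - 1) * ‖x‖ :=
    le_of_mul_le_mul_left (by linear_combination ‖x‖ * key - fzRatio a b c (c + e) x y z * hfx)
      (pow_pos hx c)
  refine pow_le_of_mul_add_pow_le hb.ne' heb (mul_nonneg hε.le fzRatio_nonneg) hx (norm_nonneg z) ?_
  calc ε * fzRatio a b c (c + e) x y z * (‖z‖ ^ b + ‖x‖ ^ e)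
      = fzRatio a b c (c + e) x y z * (ε * (‖z‖ ^ b + ‖x‖ ^ e)) := by ring
    _ ≤ fzRatio a b c (c + e) x y z * ‖(c : ℂ) * z ^ b + (c + e : ℕ) * x ^ e‖ :=
      mul_le_mul_of_nonneg_left h fzRatio_nonneg
    _ ≤ b * ‖z‖ ^ (b - 1) * ‖x‖ := hR

theorem fzRatio_pow_le_of_norm_le {m : ℕ} {K δ : ℝ} (ha : 0 < a) (hb : 0 < b) (hc : 0 < c)
    (hδ : 0 ≤ δ) (hX : inXC a b c (c + e) x y z) (hK : ‖z‖ ^ b ≤ K * ‖x‖ ^ e)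
    (hδx : δ * ‖x‖ ^ e ≤ ‖z ^ b + x ^ e‖) (hm : a * e + m = b * (c + e)) :
    fzRatio a b c (c + e) x y z ^ (a * b) * (a ^ (a * b) * δ ^ ((a - 1) * b))
      ≤ b ^ (a * b) * K ^ ((b - 1) * a) * ‖x‖ ^ m := by
  have hx : 0 < ‖x‖ := norm_pos_iff.2 (hX.x_ne_zero hc (by omega))
  have hY : δ * ‖x‖ ^ (c + e) ≤ ‖y‖ ^ a := by
    rw [← norm_pow y, hX.1, show z ^ b * x ^ c + x ^ (c + e) = x ^ c * (z ^ b + x ^ e) by ring,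
      norm_mul, norm_pow, pow_add, mul_left_comm]
    exact mul_le_mul_of_nonneg_left hδx (by positivity)
  have key := fzRatio_mul_norm_fyC_le a b c (c + e) x y z
  rw [norm_fyC, norm_fzC] at key
  exact pow_le_of_mul_pow_le ha.ne' hb.ne' fzRatio_nonneg hx (norm_nonneg _) (norm_nonneg _) hδ
    hK hY key hm

theorem aRegC_add_of_lt (ha : 0 < a) (hb : 0 < b) (hc : 0 < c) (he : 0 < e) (heb : e < b)
    (hkey : a * e < b * (c + e)) : aRegC a b c (c + e) := by
  obtain ⟨ε, hε, K, hK, δ, hδ, hdich⟩ := exists_norm_smul_add_smul_dichotomy (E := ℂ)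
    (c := c) (d := (c + e : ℕ)) (by positivity) (by exact_mod_cast Nat.lt_add_of_pos_right he)
  set m := b * (c + e) - a * e
  have hm : a * e + m = b * (c + e) := by omega
  set C₁ : ℝ := b ^ b / ε ^ b
  set C₂ : ℝ := b ^ (a * b) * K ^ ((b - 1) * a) / (a ^ (a * b) * δ ^ ((a - 1) * b))
  intro x y z hX hlim _
  change Tendsto (fun n => fzRatio a b c (c + e) (x n) (y n) (z n)) atTop (𝓝 0)
  have hx : Tendsto (fun n => ‖x n‖) atTop (𝓝 0) := by simpa using hlim.fst_nhds.norm
  refine tendsto_nhds_zero_of_pow_le (N := a * b) (by positivity)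
    (Eventually.of_forall fun _ => fzRatio_nonneg)
    (g := fun n => C₁ * ‖x n‖ ^ (b - e) + C₂ * ‖x n‖ ^ m) ?_ (Eventually.of_forall fun n => ?_)
  · simpa [show b - e ≠ 0 by omega, show m ≠ 0 by omega] using
      ((hx.pow (b - e)).const_mul C₁).add ((hx.pow m).const_mul C₂)
  rcases hdich (z n ^ b) (x n ^ e) with hA | ⟨hzK, hδx⟩
  · simp only [Complex.real_smul, Complex.ofReal_natCast, norm_pow] at hA
    have := fzRatio_pow_le_of_le_norm hb hc heb.le hε (hX n) hA
    calc fzRatio a b c (c + e) (x n) (y n) (z n) ^ (a * b)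
        ≤ fzRatio a b c (c + e) (x n) (y n) (z n) ^ b :=
          pow_le_pow_of_le_one fzRatio_nonneg fzRatio_le_one (Nat.le_mul_of_pos_left b ha)
      _ ≤ C₁ * ‖x n‖ ^ (b - e) := by
          rw [div_mul_eq_mul_div, le_div_iff₀ (by positivity), mul_comm, ← mul_pow]; exact this
      _ ≤ _ := le_add_of_nonneg_right (by positivity)
  · simp only [norm_pow] at hzK hδx
    have := fzRatio_pow_le_of_norm_le ha hb hc hδ.le (hX n) hzK hδx hm
    calc fzRatio a b c (c + e) (x n) (y n) (z n) ^ (a * b) ≤ C₂ * ‖x n‖ ^ m := by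
          rw [div_mul_eq_mul_div, le_div_iff₀ (by positivity)]; exact this
      _ ≤ _ := le_add_of_nonneg_left (by positivity)

end

theorem not_aRegC_of_forall_le {a b c d : ℕ} {x y z : ℕ → ℂ} {C : ℝ}
    (hX : ∀ n, inXC a b c d (x n) (y n) (z n))
    (hlim : Tendsto (fun n => (x n, y n, z n)) atTop (𝓝 (0, 0, 0)))
    (hfz : ∀ n, fzC b c (x n) (z n) ≠ 0)
    (hC : ∀ n, ‖fxC b c d (x n) (z n)‖ + ‖fyC a (y n)‖ ≤ C * ‖fzC b c (x n) (z n)‖) :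
    ¬ aRegC a b c d := by
  intro hreg
  have hC₀ : 0 ≤ C := by
    refine le_of_mul_le_mul_right ?_ (norm_pos_iff.2 (hfz 0))
    rw [zero_mul]; exact (add_nonneg (norm_nonneg _) (norm_nonneg _)).trans (hC 0)
  obtain ⟨n, hn⟩ := ((hreg x y z hX hlim fun n h => hfz n h.2.2).eventually
    (gt_mem_nhds (inv_pos.2 (by linarith : 0 < C + 1)))).exists
  exact (inv_add_one_le_fzRatio (hfz n) (hC n)).not_gt hn

theorem le_mul_of_mul_eq_of_le {p q X Z N α β κ : ℝ} (hX : 0 < X) (hβ : 0 < β) (hα : 0 ≤ α)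
    (hq : 0 ≤ q) (hp : p * X = α * N) (hqZ : q * Z = β * N) (hZ : Z ≤ κ * X) :
    p ≤ α * κ / β * q := by
  rw [div_mul_eq_mul_div, le_div_iff₀ hβ]
  refine le_of_mul_le_mul_right ?_ hX
  calc p * β * X = α * (q * Z) := by rw [hqZ, mul_right_comm, hp]; ring
    _ ≤ α * (q * (κ * X)) := by gcongr
    _ = α * κ * q * X := by ring

theorem exists_tendsto_zero_ne_zero_norm_le_one :
    ∃ t : ℕ → ℂ, Tendsto t atTop (𝓝 0) ∧ (∀ n, t n ≠ 0) ∧ ∀ n, ‖t n‖ ≤ 1 := by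
  refine ⟨fun n => 1 / ((n : ℂ) + 1), tendsto_one_div_add_atTop_nhds_zero_nat,
    fun n => one_div_ne_zero (Nat.cast_add_one_ne_zero n), fun n => ?_⟩
  rw [norm_div, norm_one, ← Nat.cast_add_one, Complex.norm_natCast]
  exact div_le_one_of_le₀ (by simp) (by positivity)

section

variable {a b c e : ℕ} {x y z : ℂ}

theorem norm_fxC_add_norm_fyC_zero_le {κ : ℝ} (ha : 2 ≤ a) (hb : 0 < b) (hc : 0 < c)
    (hx : x ≠ 0) (hzx : z ^ b * x ^ c = -x ^ (c + e)) (hz : ‖z‖ ≤ κ * ‖x‖) :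
    ‖fxC b c (c + e) x z‖ + ‖fyC a 0‖ ≤ e * κ / b * ‖fzC b c x z‖ := by
  have hfx : x * fxC b c (c + e) x z = -(e * x ^ (c + e)) := by
    rw [mul_fxC hc.ne' (by omega)]; push_cast; linear_combination (-c : ℂ) * hzx
  have hfz : z * fzC b c x z = b * x ^ (c + e) := by
    rw [mul_fzC hb.ne']; linear_combination (-b : ℂ) * hzx
  have hfy : fyC a 0 = 0 := by simp [fyC]; omega
  rw [hfy, norm_zero, add_zero]
  refine le_mul_of_mul_eq_of_le (norm_pos_iff.2 hx) (by positivity) (by positivity)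
    (norm_nonneg _) (N := ‖x ^ (c + e)‖) ?_ ?_ hz
  · rw [← norm_mul, mul_comm, hfx]; simp
  · rw [← norm_mul, mul_comm, hfz]; simp

theorem norm_fxC_add_norm_fyC_le {κ : ℝ} (ha : 0 < a) (hb : 0 < b) (hc : 0 < c)
    (hX : inXC a b c (c + e) x y z) (hy : y ≠ 0) (hzx : c * z ^ b = -((c + e) * x ^ e))
    (hz : ‖z‖ ≤ κ * ‖y‖) :
    ‖fxC b c (c + e) x z‖ + ‖fyC a y‖ ≤ a * e * κ / (b * (c + e)) * ‖fzC b c x z‖ := by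
  have hx := hX.x_ne_zero hc (by omega)
  have hfx : x * fxC b c (c + e) x z = 0 := by
    rw [mul_fxC hc.ne' (by omega)]; push_cast; linear_combination (-x ^ c) * hzx
  have hfy : c * (y * fyC a y) = ((a * e : ℕ) : ℂ) * -x ^ (c + e) := by
    rw [mul_fyC ha.ne']; push_cast; linear_combination (a * c : ℂ) * hX.1 + (a * x ^ c) * hzx
  have hfz : c * (z * fzC b c x z) = ((b * (c + e) : ℕ) : ℂ) * x ^ (c + e) := by
    rw [mul_fzC hb.ne']; push_cast; linear_combination (-b * x ^ c) * hzx
  rw [(mul_eq_zero.1 hfx).resolve_left hx, norm_zero, zero_add]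
  refine le_mul_of_mul_eq_of_le (norm_pos_iff.2 hy) (by positivity) (by positivity)
    (norm_nonneg _) (N := ‖x ^ (c + e)‖ / c) ?_ ?_ hz
  · have := congrArg norm hfy
    simp only [norm_mul, norm_neg, Complex.norm_natCast] at this
    rw [← mul_div_assoc, eq_div_iff (by positivity)]
    push_cast at this; linear_combination this
  · have := congrArg norm hfz
    simp only [norm_mul, Complex.norm_natCast] at this
    rw [← mul_div_assoc, eq_div_iff (by positivity)]
    push_cast at this; linear_combination this

end

theorem tendsto_const_mul_pow_nhds_zero {t : ℕ → ℂ} (ht : Tendsto t atTop (𝓝 0)) (α : ℂ)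
    {k : ℕ} (hk : k ≠ 0) : Tendsto (fun n => α * t n ^ k) atTop (𝓝 0) := by
  simpa [hk] using (ht.pow k).const_mul α

theorem not_aRegC_add_of_le {a b c e : ℕ} (ha : 2 ≤ a) (hb : 0 < b) (hc : 0 < c) (hbe : b ≤ e) :
    ¬ aRegC a b c (c + e) := by
  obtain ⟨ζ, hζ⟩ := IsAlgClosed.exists_pow_nat_eq (-1 : ℂ) hb
  have hζ₀ : ζ ≠ 0 := by rintro rfl; simp [hb.ne'] at hζ
  obtain ⟨t, ht, ht₀, ht₁⟩ := exists_tendsto_zero_ne_zero_norm_le_one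
  have hzx : ∀ n, (ζ * t n ^ e) ^ b * (t n ^ b) ^ c = -(t n ^ b) ^ (c + e) := fun n => by
    linear_combination t n ^ (b * (c + e)) * hζ
  refine not_aRegC_of_forall_le (x := fun n => t n ^ b) (y := fun _ => 0)
    (z := fun n => ζ * t n ^ e) (fun n => ⟨?_, ?_⟩) ?_ (fun n => ?_)
    (fun n => norm_fxC_add_norm_fyC_zero_le (κ := ‖ζ‖) ha hb hc (pow_ne_zero _ (ht₀ n)) (hzx n) ?_)
  · simp [zero_pow (by omega : a ≠ 0), hzx]
  · exact fun h => pow_ne_zero _ (ht₀ n) h.1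
  · refine Tendsto.prodMk_nhds ?_
      (tendsto_const_nhds.prodMk_nhds (tendsto_const_mul_pow_nhds_zero ht ζ (by omega)))
    simpa using tendsto_const_mul_pow_nhds_zero ht 1 hb.ne'
  · simp [fzC, hζ₀, ht₀, hb.ne']
  · simp only [norm_mul, norm_pow]
    exact mul_le_mul_of_nonneg_left (pow_le_pow_of_le_one (norm_nonneg _) (ht₁ n) hbe)
      (norm_nonneg _)

theorem not_aRegC_add_of_mul_le {a b c e : ℕ} (hb : 0 < b) (hc : 0 < c) (he : 0 < e)
    (hkey : b * (c + e) ≤ a * e) : ¬ aRegC a b c (c + e) := by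
  have ha : 0 < a := Nat.pos_of_mul_pos_right (lt_of_lt_of_le (by positivity) hkey)
  have hc' : (c : ℂ) ≠ 0 := by exact_mod_cast hc.ne'
  obtain ⟨η, hη⟩ := IsAlgClosed.exists_pow_nat_eq (-((c : ℂ) + e) / c) hb
  obtain ⟨μ, hμ⟩ := IsAlgClosed.exists_pow_nat_eq (-(e : ℂ) / c) ha
  have hη' : c * η ^ b = -((c : ℂ) + e) := by rw [hη]; field_simp
  have hμ' : c * μ ^ a = -(e : ℂ) := by rw [hμ]; field_simp
  have hη₀ : η ≠ 0 := fun h => by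
    rw [h, zero_pow hb.ne', mul_zero, zero_eq_neg] at hη'; norm_cast at hη'; omega
  have hμ₀ : μ ≠ 0 := fun h => by
    rw [h, zero_pow ha.ne', mul_zero, zero_eq_neg, Nat.cast_eq_zero] at hμ'; omega
  obtain ⟨t, ht, ht₀, ht₁⟩ := exists_tendsto_zero_ne_zero_norm_le_one
  have hX : ∀ n, inXC a b c (c + e) (t n ^ (a * b)) (μ * t n ^ (b * (c + e))) (η * t n ^ (a * e)) :=
    fun n => ⟨mul_left_cancel₀ hc' (by linear_combination t n ^ (a * b * (c + e)) * (hμ' - hη')),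
      fun h => pow_ne_zero _ (ht₀ n) h.1⟩
  refine not_aRegC_of_forall_le hX ?_ (fun n => ?_)
    (fun n => norm_fxC_add_norm_fyC_le (κ := ‖η‖ / ‖μ‖) ha hb hc (hX n)
      (mul_ne_zero hμ₀ (pow_ne_zero _ (ht₀ n))) ?_ ?_)
  · refine Tendsto.prodMk_nhds ?_
      ((tendsto_const_mul_pow_nhds_zero ht μ (by positivity)).prodMk_nhds
        (tendsto_const_mul_pow_nhds_zero ht η (by positivity)))
    simpa using tendsto_const_mul_pow_nhds_zero ht 1 (by positivity)
  · simp [fzC, hη₀, ht₀, hb.ne']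
  · linear_combination t n ^ (a * e * b) * hη'
  · simp only [norm_mul, norm_pow]
    calc ‖η‖ * ‖t n‖ ^ (a * e) ≤ ‖η‖ * ‖t n‖ ^ (b * (c + e)) :=
          mul_le_mul_of_nonneg_left (pow_le_pow_of_le_one (norm_nonneg _) (ht₁ n) hkey)
            (norm_nonneg _)
      _ = ‖η‖ / ‖μ‖ * (‖μ‖ * ‖t n‖ ^ (b * (c + e))) := by
          field_simp [norm_ne_zero_iff.2 hμ₀]

theorem or_mul_sub_lt_iff {a b c e : ℕ} (hb : 0 < b) (hc : 0 < c) :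
    (a ≤ b ∨ (c + e) * (a - b) < a * c) ↔ a * e < b * (c + e) := by
  rcases le_or_gt a b with hab | hab
  · simp only [hab, true_or, true_iff]
    calc a * e ≤ b * e := Nat.mul_le_mul_right e hab
      _ < b * (c + e) := by nlinarith
  · obtain ⟨k, rfl⟩ : ∃ k, a = b + k := ⟨a - b, by omega⟩
    simp only [Nat.add_sub_cancel_left, not_le.2 hab, false_or]
    ring_nf; omega

/-- Whitney (a)-regularity classification for y^a = z^b x^c + x^d in ℂ³ (Diagram 1). -/
theorem whitney_a_complex (a b c d : ℕ) (ha : 0 < a) (hb : 0 < b) (hc : 0 < c) (hd : 0 < d) :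
    aRegC a b c d ↔
      a = 1 ∨ d ≤ c ∨ (c < d ∧ d < b + c ∧ (a ≤ b ∨ d * (a - b) < a * c)) := by
  rcases le_or_gt d c with hdc | hcd
  · simp only [hdc, true_or, or_true, iff_true]
    exact aRegC_of_le hb hd hdc
  obtain ⟨e, rfl⟩ : ∃ e, d = c + e := ⟨d - c, by omega⟩
  simp only [not_le.2 hcd, hcd, false_or, true_and, add_comm b c, Nat.add_lt_add_iff_left,
    or_mul_sub_lt_iff hb hc]
  constructor
  · intro hreg
    rcases eq_or_ne a 1 with rfl | ha₁
    · exact Or.inl rfl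
    have heb : e < b := lt_of_not_ge fun hbe => not_aRegC_add_of_le (by omega) hb hc hbe hreg
    exact Or.inr ⟨heb, lt_of_not_ge fun hkey => not_aRegC_add_of_mul_le hb hc (by omega) hkey hreg⟩
  · rintro (rfl | ⟨heb, hkey⟩)
    · exact aRegC_one hc
    · exact aRegC_add_of_lt ha hb hc (by omega) heb hkey
end
end

section
/- Let a, c, d be positive integers and set b = 1. For the pair (X, Oz) associated to the real surface V = {(x,y,z) ∈ ℝ³ : y^a = z·x^c + x^d}, Whitney (a)-regularity at the origin holds if and only if Whitney (b)-regularity at the origin holds; indeed both are equivalent to (a = 1 or d ≤ c). -/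
open Filter

noncomputable section

/-- x-partial derivative of f(x,y,z) = y^a - z^b*x^c - x^d. -/
def fxR (b c d : ℕ) (x z : ℝ) : ℝ :=
  -(c : ℝ) * z ^ b * x ^ (c - 1) - (d : ℝ) * x ^ (d - 1)

/-- y-partial derivative of f. -/
def fyR (a : ℕ) (y : ℝ) : ℝ := (a : ℝ) * y ^ (a - 1)

/-- z-partial derivative of f. -/
def fzR (b c : ℕ) (x z : ℝ) : ℝ := -(b : ℝ) * z ^ (b - 1) * x ^ c

/-- Euclidean norm on ℝ³. -/
def nrm3R (u v w : ℝ) : ℝ := Real.sqrt (u ^ 2 + v ^ 2 + w ^ 2)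

/-- Euclidean norm on ℝ². -/
def nrm2R (u v : ℝ) : ℝ := Real.sqrt (u ^ 2 + v ^ 2)

/-- Norm of the gradient ∇f(x,y,z). -/
def gradNormR (a b c d : ℕ) (x y z : ℝ) : ℝ :=
  nrm3R (fxR b c d x z) (fyR a y) (fzR b c x z)

/-- The gradient ∇f(x,y,z) is nonzero. -/
def gradNeR (a b c d : ℕ) (x y z : ℝ) : Prop :=
  ¬ (fxR b c d x z = 0 ∧ fyR a y = 0 ∧ fzR b c x z = 0)

/-- Membership in X = V \ Oz, where V = {y^a = z^b x^c + x^d} and Oz is the z-axis. -/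
def inXR (a b c d : ℕ) (x y z : ℝ) : Prop :=
  y ^ a = z ^ b * x ^ c + x ^ d ∧ ¬ (x = 0 ∧ y = 0)

/-- Whitney (a)-regularity of the pair (X, Oz) at the origin. -/
def aRegR (a b c d : ℕ) : Prop :=
  ∀ x y z : ℕ → ℝ,
    (∀ n, inXR a b c d (x n) (y n) (z n)) →
    Tendsto (fun n => (x n, y n, z n)) atTop (nhds ((0 : ℝ), (0 : ℝ), (0 : ℝ))) →
    (∀ n, gradNeR a b c d (x n) (y n) (z n)) →
    Tendsto (fun n => |fzR b c (x n) (z n)| / gradNormR a b c d (x n) (y n) (z n))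
      atTop (nhds 0)

/-- The (bᵖⁱ) condition for the retraction π(x,y,z) = (0,0,z). -/
def bpiR (a b c d : ℕ) : Prop :=
  ∀ x y z : ℕ → ℝ,
    (∀ n, inXR a b c d (x n) (y n) (z n)) →
    Tendsto (fun n => (x n, y n, z n)) atTop (nhds ((0 : ℝ), (0 : ℝ), (0 : ℝ))) →
    (∀ n, gradNeR a b c d (x n) (y n) (z n)) →
    Tendsto (fun n => |x n * fxR b c d (x n) (z n) + y n * fyR a (y n)| /
        (nrm2R (x n) (y n) * gradNormR a b c d (x n) (y n) (z n)))
      atTop (nhds 0)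

/-- Whitney (b)-regularity of the pair (X, Oz) at the origin. -/
def bRegR (a b c d : ℕ) : Prop := aRegR a b c d ∧ bpiR a b c d

/-- Kuo–Verdier (w)-regularity of the pair (X, Oz) at the origin. -/
def wRegR (a b c d : ℕ) : Prop :=
  ∃ C : ℝ, 0 < C ∧ ∃ ε : ℝ, 0 < ε ∧ ∀ x y z : ℝ,
    inXR a b c d x y z → nrm3R x y z < ε → gradNeR a b c d x y z →
    |fzR b c x z| ≤ C * nrm2R x y * gradNormR a b c d x y z

/-!
With `b = 1` we have `∂f/∂z = -x ^ c`. If `a = 1` then `|∂f/∂y| = 1`, and if `d ≤ c` then near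
the origin `|∂f/∂x| ≥ (d/2) |x| ^ (d - 1)` dominates `|x| ^ c`; either way (a) holds. Otherwise
`a ≥ 2` and `c < d`, the curve `y = 0, z = -x ^ (d - c)` lies in `X`, and along it `‖∇f‖` is
comparable to `x ^ c`, so (a) fails.

For (b^π), on `V` we have `x ∂f/∂x + y ∂f/∂y = (a - c) z x ^ c + (a - d) x ^ d`. When `a = 1`,
dividing by `‖(x, y)‖ ‖∇f‖ ≥ |x|` already makes both terms small. When `d ≤ c`, the
denominator `‖(x, y)‖ ‖∇f‖` is at least `(d/2) |x| ^ d`, which disposes of the first term since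
`z → 0`. For the second, `|y| ^ a` and `|x| ^ d` agree up to a factor `2`, and the denominator
is also at least `a |x| |y| ^ (a - 1)` and `(d/2) |y| |x| ^ (d - 1)`; hence `|x| ^ d` over it is
bounded by multiples of both `|y| / |x|` and `|x| / |y|`, one of which tends to `0` unless
`a = d`, when the term vanishes.
-/

lemma nrm2R_nonneg (u v : ℝ) : 0 ≤ nrm2R u v := Real.sqrt_nonneg _

lemma abs_le_nrm2R_left (u v : ℝ) : |u| ≤ nrm2R u v := by
  rw [nrm2R, ← Real.sqrt_sq_eq_abs]
  exact Real.sqrt_le_sqrt (le_add_of_nonneg_right (sq_nonneg v))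

lemma abs_le_nrm2R_right (u v : ℝ) : |v| ≤ nrm2R u v := by
  rw [nrm2R, ← Real.sqrt_sq_eq_abs]
  exact Real.sqrt_le_sqrt (le_add_of_nonneg_left (sq_nonneg u))

lemma abs_le_nrm3R_left (u v w : ℝ) : |u| ≤ nrm3R u v w := by
  rw [nrm3R, ← Real.sqrt_sq_eq_abs]
  exact Real.sqrt_le_sqrt (by linarith [sq_nonneg v, sq_nonneg w])

lemma abs_le_nrm3R_mid (u v w : ℝ) : |v| ≤ nrm3R u v w := by
  rw [nrm3R, ← Real.sqrt_sq_eq_abs]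
  exact Real.sqrt_le_sqrt (by linarith [sq_nonneg u, sq_nonneg w])

lemma abs_le_nrm3R_right (u v w : ℝ) : |w| ≤ nrm3R u v w := by
  rw [nrm3R, ← Real.sqrt_sq_eq_abs]
  exact Real.sqrt_le_sqrt (by linarith [sq_nonneg u, sq_nonneg v])

lemma nrm3R_le_abs_add_abs_add_abs (u v w : ℝ) : nrm3R u v w ≤ |u| + |v| + |w| := by
  rw [nrm3R, Real.sqrt_le_left (by positivity)]
  nlinarith [sq_abs u, sq_abs v, sq_abs w, mul_nonneg (abs_nonneg u) (abs_nonneg v),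
    mul_nonneg (abs_nonneg u) (abs_nonneg w), mul_nonneg (abs_nonneg v) (abs_nonneg w)]

lemma tendsto_zero_of_pow_le {α : Type*} {l : Filter α} {u v : α → ℝ} {m : ℕ} (hm : m ≠ 0)
    (hu : ∀ i, 0 ≤ u i) (hle : ∀ᶠ i in l, u i ^ m ≤ v i) (hv : Tendsto v l (nhds 0)) :
    Tendsto u l (nhds 0) := by
  have hroot : Tendsto (fun i => v i ^ (m⁻¹ : ℝ)) l (nhds 0) := by
    simpa [Real.zero_rpow (inv_ne_zero (Nat.cast_ne_zero.2 hm))]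
      using hv.rpow_const (p := (m⁻¹ : ℝ)) (Or.inr (by positivity))
  refine squeeze_zero' (.of_forall hu) ?_ hroot
  filter_upwards [hle] with i hi
  calc u i = (u i ^ m) ^ (m⁻¹ : ℝ) := (Real.pow_rpow_inv_natCast (hu i) hm).symm
    _ ≤ v i ^ (m⁻¹ : ℝ) := Real.rpow_le_rpow (pow_nonneg (hu i) m) hi (by positivity)

section Gradient

variable (a b c d : ℕ) (x y z : ℝ)

lemma gradNormR_nonneg : 0 ≤ gradNormR a b c d x y z := Real.sqrt_nonneg _

lemma abs_fxR_le_gradNormR : |fxR b c d x z| ≤ gradNormR a b c d x y z :=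
  abs_le_nrm3R_left _ _ _

lemma abs_fyR_le_gradNormR : |fyR a y| ≤ gradNormR a b c d x y z := abs_le_nrm3R_mid _ _ _

lemma abs_fzR_le_gradNormR : |fzR b c x z| ≤ gradNormR a b c d x y z :=
  abs_le_nrm3R_right _ _ _

lemma abs_fyR : |fyR a y| = a * |y| ^ (a - 1) := by simp [fyR, abs_mul, abs_pow]

lemma one_le_gradNormR_one : 1 ≤ gradNormR 1 b c d x y z := by
  simpa [fyR] using abs_fyR_le_gradNormR 1 b c d x y z

lemma abs_fzR_one : |fzR 1 c x z| = |x| ^ c := by simp [fzR, abs_pow]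

end Gradient

section Surface

variable {a c d : ℕ} {x y z : ℝ}

lemma ne_zero_of_inXR {b : ℕ} (ha : 0 < a) (hc : 0 < c) (hd : 0 < d)
    (h : inXR a b c d x y z) : x ≠ 0 := by
  rintro rfl
  refine h.2 ⟨rfl, (pow_eq_zero_iff ha.ne').1 ?_⟩
  simpa [hc.ne', hd.ne'] using h.1

lemma inXR_one_eq (h : inXR a 1 c d x y z) : y ^ a = z * x ^ c + x ^ d := by
  simpa using h.1

lemma mul_fxR_add_mul_fyR (ha : 0 < a) (hc : 0 < c) (hd : 0 < d)
    (hV : y ^ a = z * x ^ c + x ^ d) :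
    x * fxR 1 c d x z + y * fyR a y = (a - c) * z * x ^ c + (a - d) * x ^ d := by
  calc x * fxR 1 c d x z + y * fyR a y
      = -c * z * (x * x ^ (c - 1)) - d * (x * x ^ (d - 1)) + a * (y * y ^ (a - 1)) := by
        simp only [fxR, fyR, pow_one]; ring
    _ = _ := by
        rw [mul_pow_sub_one hc.ne', mul_pow_sub_one hd.ne', mul_pow_sub_one ha.ne', hV]; ring

lemma abs_mul_fxR_add_mul_fyR_le (ha : 0 < a) (hc : 0 < c) (hd : 0 < d)
    (hV : y ^ a = z * x ^ c + x ^ d) :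
    |x * fxR 1 c d x z + y * fyR a y| ≤ |(a : ℝ) - c| * |z| * |x| ^ c + |(a : ℝ) - d| * |x| ^ d := by
  rw [mul_fxR_add_mul_fyR ha hc hd hV]
  refine (abs_add_le _ _).trans_eq ?_
  simp only [abs_mul, abs_pow]

lemma abs_mul_fxR_add_mul_fyR_div_le_of_a_eq_one (hc : 0 < c) (hd : 0 < d) (hx0 : x ≠ 0)
    (hV : y ^ 1 = z * x ^ c + x ^ d) :
    |x * fxR 1 c d x z + y * fyR 1 y| / (nrm2R x y * gradNormR 1 1 c d x y z) ≤
      |(1 : ℝ) - c| * |z| * |x| ^ (c - 1) + |(1 : ℝ) - d| * |x| ^ (d - 1) := by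
  have hx0' := abs_pos.2 hx0
  have hD : |x| * 1 ≤ nrm2R x y * gradNormR 1 1 c d x y z :=
    mul_le_mul (abs_le_nrm2R_left x y) (one_le_gradNormR_one 1 c d x y z) zero_le_one
      (nrm2R_nonneg x y)
  have hnum := abs_mul_fxR_add_mul_fyR_le one_pos hc hd hV
  rw [Nat.cast_one] at hnum
  calc |x * fxR 1 c d x z + y * fyR 1 y| / (nrm2R x y * gradNormR 1 1 c d x y z)
      ≤ (|(1 : ℝ) - c| * |z| * |x| ^ c + |(1 : ℝ) - d| * |x| ^ d) / (|x| * 1) :=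
        div_le_div₀ (by positivity) hnum (by positivity) hD
    _ = _ := by
        rw [← mul_pow_sub_one hc.ne' |x|, ← mul_pow_sub_one hd.ne' |x|]; field_simp

end Surface

section NearOrigin

variable {a c d : ℕ} {x y z : ℝ}

lemma half_mul_abs_pow_le_abs_fxR (hdc : d ≤ c) (hx : |x| ≤ 1) (hz : 2 * c * |z| ≤ d) :
    d / 2 * |x| ^ (d - 1) ≤ |fxR 1 c d x z| := by
  have hsmall : c * |z| * |x| ^ (c - 1) ≤ d / 2 * |x| ^ (d - 1) :=
    mul_le_mul (by linarith) (pow_le_pow_of_le_one (abs_nonneg x) hx (by omega))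
      (by positivity) (by positivity)
  have hfx : fxR 1 c d x z = -(d * x ^ (d - 1) + c * z * x ^ (c - 1)) := by
    simp only [fxR, pow_one]; ring
  rw [hfx, abs_neg]
  calc d / 2 * |x| ^ (d - 1) ≤ |(d : ℝ) * x ^ (d - 1)| - |c * z * x ^ (c - 1)| := by
        simp only [abs_mul, abs_pow, Nat.abs_cast]; linarith
    _ ≤ _ := abs_sub_abs_le_abs_add _ _

lemma abs_pow_le_two_mul_abs_pow (hc : 0 < c) (hdc : d ≤ c) (hx : |x| ≤ 1)
    (hz : 2 * c * |z| ≤ d) (hV : y ^ a = z * x ^ c + x ^ d) :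
    |x| ^ d ≤ 2 * |y| ^ a ∧ |y| ^ a ≤ 2 * |x| ^ d := by
  have hz' : |z| ≤ 1 / 2 := by
    have : (d : ℝ) ≤ c := by exact_mod_cast hdc
    have : (0 : ℝ) < c := by exact_mod_cast hc
    nlinarith [abs_nonneg z]
  have hsmall : |z * x ^ c| ≤ 1 / 2 * |x| ^ d := by
    rw [abs_mul, abs_pow]
    exact mul_le_mul hz' (pow_le_pow_of_le_one (abs_nonneg x) hx hdc) (by positivity)
      (by norm_num)
  have hy : |y| ^ a = |z * x ^ c + x ^ d| := by rw [← abs_pow, hV]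
  have hlow := abs_sub_abs_le_abs_add (x ^ d) (z * x ^ c)
  have hupp := abs_add_le (z * x ^ c) (x ^ d)
  rw [abs_pow, add_comm] at hlow
  rw [abs_pow] at hupp
  constructor <;> linarith [pow_nonneg (abs_nonneg x) d]

lemma abs_pos_of_abs_pow_le_two_mul (ha : 0 < a) (hx0 : x ≠ 0) (h : |x| ^ d ≤ 2 * |y| ^ a) :
    0 < |y| := by
  refine abs_pos.2 fun hy => ?_
  rw [hy, abs_zero, zero_pow ha.ne', mul_zero] at h
  exact (pow_pos (abs_pos.2 hx0) d).not_ge h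

lemma abs_fzR_div_gradNormR_le_of_le (hd : 0 < d) (hdc : d ≤ c) (hx0 : x ≠ 0) (hx : |x| ≤ 1)
    (hz : 2 * c * |z| ≤ d) :
    |fzR 1 c x z| / gradNormR a 1 c d x y z ≤ 2 / d * |x| ^ (c + 1 - d) := by
  have hgrad := (half_mul_abs_pow_le_abs_fxR hdc hx hz).trans (abs_fxR_le_gradNormR a 1 c d x y z)
  have hx0' : 0 < |x| := abs_pos.2 hx0
  have hsplit : |x| ^ c = |x| ^ (d - 1) * |x| ^ (c + 1 - d) := by
    rw [← pow_add]; congr 1; omega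
  calc |fzR 1 c x z| / gradNormR a 1 c d x y z ≤ |x| ^ c / (d / 2 * |x| ^ (d - 1)) := by
        rw [abs_fzR_one]; exact div_le_div_of_nonneg_left (by positivity) (by positivity) hgrad
    _ = 2 / d * |x| ^ (c + 1 - d) := by
        rw [hsplit]; field_simp

lemma half_mul_abs_pow_le_nrm2R_mul_gradNormR (hd : 0 < d) (hdc : d ≤ c) (hx : |x| ≤ 1)
    (hz : 2 * c * |z| ≤ d) :
    d / 2 * |x| ^ d ≤ nrm2R x y * gradNormR a 1 c d x y z :=
  calc d / 2 * |x| ^ d = |x| * (d / 2 * |x| ^ (d - 1)) := by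
        rw [← mul_pow_sub_one hd.ne' |x|]; ring
    _ ≤ _ := mul_le_mul (abs_le_nrm2R_left x y)
        ((half_mul_abs_pow_le_abs_fxR hdc hx hz).trans (abs_fxR_le_gradNormR a 1 c d x y z))
        (by positivity) (nrm2R_nonneg x y)

lemma abs_mul_fxR_add_mul_fyR_div_le_of_le (ha : 0 < a) (hc : 0 < c) (hd : 0 < d) (hdc : d ≤ c)
    (hx0 : x ≠ 0) (hx : |x| ≤ 1) (hz : 2 * c * |z| ≤ d) (hV : y ^ a = z * x ^ c + x ^ d) :
    |x * fxR 1 c d x z + y * fyR a y| / (nrm2R x y * gradNormR a 1 c d x y z) ≤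
      |(a : ℝ) - c| * |z| * (2 / d) +
        |(a : ℝ) - d| * (|x| ^ d / (nrm2R x y * gradNormR a 1 c d x y z)) := by
  set D := nrm2R x y * gradNormR a 1 c d x y z
  have hD := half_mul_abs_pow_le_nrm2R_mul_gradNormR (a := a) (y := y) hd hdc hx hz
  have hxd : 0 < d / 2 * |x| ^ d := by have := abs_pos.2 hx0; positivity
  have hxc : |x| ^ c / D ≤ 2 / d :=
    calc |x| ^ c / D ≤ |x| ^ d / (d / 2 * |x| ^ d) :=
          div_le_div₀ (by positivity) (pow_le_pow_of_le_one (abs_nonneg x) hx hdc) hxd hD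
      _ = 2 / d := by field_simp
  calc |x * fxR 1 c d x z + y * fyR a y| / D
      ≤ (|(a : ℝ) - c| * |z| * |x| ^ c + |(a : ℝ) - d| * |x| ^ d) / D :=
        div_le_div_of_nonneg_right (abs_mul_fxR_add_mul_fyR_le ha hc hd hV) (hxd.le.trans hD)
    _ = |(a : ℝ) - c| * |z| * (|x| ^ c / D) + |(a : ℝ) - d| * (|x| ^ d / D) := by ring
    _ ≤ _ := by gcongr
lemma abs_pow_div_le_abs_div_left (ha : 0 < a) (hc : 0 < c) (hdc : d ≤ c) (hx0 : x ≠ 0)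
    (hx : |x| ≤ 1) (hz : 2 * c * |z| ≤ d) (hV : y ^ a = z * x ^ c + x ^ d) :
    |x| ^ d / (nrm2R x y * gradNormR a 1 c d x y z) ≤ 2 / a * (|y| / |x|) := by
  have hxy := (abs_pow_le_two_mul_abs_pow hc hdc hx hz hV).1
  have hy0 := abs_pos_of_abs_pow_le_two_mul ha hx0 hxy
  have hx0' := abs_pos.2 hx0
  have hD : |x| * (a * |y| ^ (a - 1)) ≤ nrm2R x y * gradNormR a 1 c d x y z :=
    mul_le_mul (abs_le_nrm2R_left x y) ((abs_fyR a y).symm.trans_le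
      (abs_fyR_le_gradNormR a 1 c d x y z)) (by positivity) (nrm2R_nonneg x y)
  calc |x| ^ d / (nrm2R x y * gradNormR a 1 c d x y z)
      ≤ 2 * |y| ^ a / (|x| * (a * |y| ^ (a - 1))) :=
        div_le_div₀ (by positivity) hxy (by positivity) hD
    _ = 2 / a * (|y| / |x|) := by
        rw [← mul_pow_sub_one ha.ne' |y|]; field_simp

lemma abs_pow_div_le_abs_div_right (ha : 0 < a) (hc : 0 < c) (hd : 0 < d) (hdc : d ≤ c)
    (hx0 : x ≠ 0) (hx : |x| ≤ 1) (hz : 2 * c * |z| ≤ d) (hV : y ^ a = z * x ^ c + x ^ d) :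
    |x| ^ d / (nrm2R x y * gradNormR a 1 c d x y z) ≤ 2 / d * (|x| / |y|) := by
  have hy0 := abs_pos_of_abs_pow_le_two_mul ha hx0 (abs_pow_le_two_mul_abs_pow hc hdc hx hz hV).1
  have hx0' := abs_pos.2 hx0
  have hD : |y| * (d / 2 * |x| ^ (d - 1)) ≤ nrm2R x y * gradNormR a 1 c d x y z :=
    mul_le_mul (abs_le_nrm2R_right x y)
      ((half_mul_abs_pow_le_abs_fxR hdc hx hz).trans (abs_fxR_le_gradNormR a 1 c d x y z))
      (by positivity) (nrm2R_nonneg x y)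
  calc |x| ^ d / (nrm2R x y * gradNormR a 1 c d x y z)
      ≤ |x| * |x| ^ (d - 1) / (|y| * (d / 2 * |x| ^ (d - 1))) :=
        div_le_div₀ (by positivity) (mul_pow_sub_one hd.ne' |x|).ge (by positivity) hD
    _ = 2 / d * (|x| / |y|) := by field_simp

end NearOrigin

section Curve

variable {a c d : ℕ} {t : ℝ}

lemma inXR_curve (ha : 0 < a) (hcd : c ≤ d) (ht : t ≠ 0) : inXR a 1 c d t 0 (-t ^ (d - c)) :=
  ⟨by rw [zero_pow ha.ne', pow_one, neg_mul, ← pow_add, Nat.sub_add_cancel hcd]; ring,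
    fun h => ht h.1⟩

lemma one_div_le_abs_fzR_div_gradNormR_curve (ha : 2 ≤ a) (hc : 0 < c) (hcd : c < d)
    (ht0 : 0 < t) (ht1 : t ≤ 1) :
    1 / (d - c + 1 : ℝ) ≤ |fzR 1 c t (-t ^ (d - c))| / gradNormR a 1 c d t 0 (-t ^ (d - c)) := by
  have hcd' : (c : ℝ) < d := by exact_mod_cast hcd
  have hfz : |fzR 1 c t (-t ^ (d - c))| = t ^ c := by rw [abs_fzR_one, abs_of_pos ht0]
  have hfy : fyR a 0 = 0 := by simp [fyR, zero_pow (show a - 1 ≠ 0 by omega)]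
  have hfx : fxR 1 c d t (-t ^ (d - c)) = (c - d) * t ^ (d - 1) := by
    have h : t ^ (d - c) * t ^ (c - 1) = t ^ (d - 1) := by rw [← pow_add]; congr 1; omega
    simp only [fxR, pow_one]; linear_combination (c : ℝ) * h
  have hgrad : gradNormR a 1 c d t 0 (-t ^ (d - c)) ≤ (d - c + 1) * t ^ c :=
    calc gradNormR a 1 c d t 0 (-t ^ (d - c))
        ≤ |fxR 1 c d t (-t ^ (d - c))| + |fyR a 0| + |fzR 1 c t (-t ^ (d - c))| :=
          nrm3R_le_abs_add_abs_add_abs _ _ _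
      _ = (d - c) * t ^ (d - 1) + t ^ c := by
          rw [hfx, hfy, hfz, abs_mul, abs_of_neg (by linarith), abs_of_pos (pow_pos ht0 _)]
          simp
      _ ≤ (d - c + 1) * t ^ c := by
          nlinarith [pow_le_pow_of_le_one ht0.le ht1 (show c ≤ d - 1 by omega)]
  have hpos : 0 < gradNormR a 1 c d t 0 (-t ^ (d - c)) :=
    (pow_pos ht0 c).trans_le (hfz ▸ abs_fzR_le_gradNormR a 1 c d t 0 _)
  calc 1 / (d - c + 1 : ℝ) = t ^ c / ((d - c + 1) * t ^ c) := by
        have := pow_pos ht0 c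
        field_simp
    _ ≤ _ := by rw [hfz]; exact div_le_div_of_nonneg_left (by positivity) hpos hgrad

end Curve

section Sequences

variable {a c d : ℕ} {x y z : ℕ → ℝ}

lemma tendsto_abs_of_tendsto_zero
    (hlim : Tendsto (fun n => (x n, y n, z n)) atTop (nhds ((0 : ℝ), (0 : ℝ), (0 : ℝ)))) :
    Tendsto (fun n => |x n|) atTop (nhds 0) ∧ Tendsto (fun n => |z n|) atTop (nhds 0) :=
  ⟨by simpa using hlim.fst_nhds.abs, by simpa using hlim.snd_nhds.snd_nhds.abs⟩

lemma eventually_near_origin (c : ℕ) (hd : 0 < d)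
    (hlim : Tendsto (fun n => (x n, y n, z n)) atTop (nhds ((0 : ℝ), (0 : ℝ), (0 : ℝ)))) :
    ∀ᶠ n in atTop, |x n| ≤ 1 ∧ 2 * c * |z n| ≤ d := by
  obtain ⟨hx, hz⟩ := tendsto_abs_of_tendsto_zero hlim
  have hz' : Tendsto (fun n => 2 * c * |z n|) atTop (nhds 0) := by
    simpa using hz.const_mul (2 * c : ℝ)
  exact (hx.eventually_le_const one_pos).and (hz'.eventually_le_const (by positivity))

lemma tendsto_abs_pow_div_of_ne (ha : 0 < a) (hc : 0 < c) (hd : 0 < d) (hdc : d ≤ c)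
    (had : a ≠ d) (hX : ∀ n, inXR a 1 c d (x n) (y n) (z n))
    (hlim : Tendsto (fun n => (x n, y n, z n)) atTop (nhds ((0 : ℝ), (0 : ℝ), (0 : ℝ)))) :
    Tendsto (fun n => |x n| ^ d / (nrm2R (x n) (y n) * gradNormR a 1 c d (x n) (y n) (z n)))
      atTop (nhds 0) := by
  have hx := (tendsto_abs_of_tendsto_zero hlim).1
  have hnear := eventually_near_origin c hd hlim
  have hx0 n := ne_zero_of_inXR ha hc hd (hX n)
  have hnonneg n : 0 ≤ |x n| ^ d / (nrm2R (x n) (y n) * gradNormR a 1 c d (x n) (y n) (z n)) :=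
    div_nonneg (by positivity) (mul_nonneg (nrm2R_nonneg _ _) (gradNormR_nonneg _ _ _ _ _ _ _))
  rcases had.lt_or_gt with had | had
  · have hyx : Tendsto (fun n => |y n| / |x n|) atTop (nhds 0) := by
      refine tendsto_zero_of_pow_le ha.ne' (fun n => by positivity) ?_
        (by simpa [(Nat.sub_pos_of_lt had).ne'] using (hx.pow (d - a)).const_mul 2)
      filter_upwards [hnear] with n ⟨hx1, hz⟩
      have hxpos := pow_pos (abs_pos.2 (hx0 n)) a
      rw [div_pow, div_le_iff₀ hxpos, mul_assoc, ← pow_add, Nat.sub_add_cancel had.le]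
      exact (abs_pow_le_two_mul_abs_pow hc hdc hx1 hz (inXR_one_eq (hX n))).2
    refine squeeze_zero' (.of_forall hnonneg) ?_ (by simpa using hyx.const_mul (2 / a : ℝ))
    filter_upwards [hnear] with n ⟨hx1, hz⟩
    exact abs_pow_div_le_abs_div_left ha hc hdc (hx0 n) hx1 hz (inXR_one_eq (hX n))
  · have hxy : Tendsto (fun n => |x n| / |y n|) atTop (nhds 0) := by
      refine tendsto_zero_of_pow_le ha.ne' (fun n => by positivity) ?_
        (by simpa [(Nat.sub_pos_of_lt had).ne'] using (hx.pow (a - d)).const_mul 2)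
      filter_upwards [hnear] with n ⟨hx1, hz⟩
      have hbd := (abs_pow_le_two_mul_abs_pow hc hdc hx1 hz (inXR_one_eq (hX n))).1
      have hypos := pow_pos (abs_pos_of_abs_pow_le_two_mul ha (hx0 n) hbd) a
      rw [div_pow, div_le_iff₀ hypos]
      calc |x n| ^ a = |x n| ^ (a - d) * |x n| ^ d := by rw [← pow_add, Nat.sub_add_cancel had.le]
        _ ≤ |x n| ^ (a - d) * (2 * |y n| ^ a) := by gcongr
        _ = 2 * |x n| ^ (a - d) * |y n| ^ a := by ring
    refine squeeze_zero' (.of_forall hnonneg) ?_ (by simpa using hxy.const_mul (2 / d : ℝ))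
    filter_upwards [hnear] with n ⟨hx1, hz⟩
    exact abs_pow_div_le_abs_div_right ha hc hd hdc (hx0 n) hx1 hz (inXR_one_eq (hX n))

end Sequences

section Regularity

variable {a c d : ℕ}

lemma a_eq_one_or_le_of_aRegR (ha : 0 < a) (hc : 0 < c) (hA : aRegR a 1 c d) :
    a = 1 ∨ d ≤ c := by
  by_contra! h
  obtain ⟨ha1, hcd⟩ := h
  set t : ℕ → ℝ := fun n => 1 / (n + 1)
  have ht0 n : 0 < t n := Nat.one_div_pos_of_nat
  have ht1 n : t n ≤ 1 := div_le_one_of_le₀ (by simp) (by positivity)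
  have ht : Tendsto t atTop (nhds 0) := tendsto_one_div_add_atTop_nhds_zero_nat
  have hz : Tendsto (fun n => -t n ^ (d - c)) atTop (nhds 0) := by
    simpa [(Nat.sub_pos_of_lt hcd).ne'] using (ht.pow (d - c)).neg
  have hratio := hA t (fun _ => 0) (fun n => -t n ^ (d - c))
    (fun n => inXR_curve ha hcd.le (ht0 n).ne')
    (ht.prodMk_nhds (tendsto_const_nhds.prodMk_nhds hz))
    (fun n h => (pow_pos (ht0 n) c).ne' (by simpa [fzR] using h.2.2))
  have hbound := ge_of_tendsto' hratio fun n =>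
    one_div_le_abs_fzR_div_gradNormR_curve (by omega) hc hcd (ht0 n) (ht1 n)
  have hcd' : (c : ℝ) < d := by exact_mod_cast hcd
  exact (one_div_pos.2 (by linarith : (0 : ℝ) < d - c + 1)).not_ge hbound

lemma aRegR_of_a_eq_one_or_le (ha : 0 < a) (hc : 0 < c) (hd : 0 < d) (h : a = 1 ∨ d ≤ c) :
    aRegR a 1 c d := by
  intro x y z hX hlim _
  have hx := (tendsto_abs_of_tendsto_zero hlim).1
  have hnonneg n : 0 ≤ |fzR 1 c (x n) (z n)| / gradNormR a 1 c d (x n) (y n) (z n) :=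
    div_nonneg (abs_nonneg _) (gradNormR_nonneg _ _ _ _ _ _ _)
  rcases h with rfl | hdc
  · refine squeeze_zero hnonneg (fun n => ?_) (by simpa [hc.ne'] using hx.pow c)
    rw [← abs_fzR_one c (x n) (z n)]
    exact div_le_self (abs_nonneg _) (one_le_gradNormR_one 1 c d _ _ _)
  · refine squeeze_zero' (.of_forall hnonneg) ?_
      (by simpa [show c + 1 - d ≠ 0 by omega] using (hx.pow (c + 1 - d)).const_mul (2 / d : ℝ))
    filter_upwards [eventually_near_origin c hd hlim] with n ⟨hx1, hz⟩
    exact abs_fzR_div_gradNormR_le_of_le hd hdc (ne_zero_of_inXR ha hc hd (hX n)) hx1 hz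

lemma bpiR_of_a_eq_one_or_le (ha : 0 < a) (hc : 0 < c) (hd : 0 < d) (h : a = 1 ∨ d ≤ c) :
    bpiR a 1 c d := by
  intro x y z hX hlim _
  obtain ⟨hx, hz⟩ := tendsto_abs_of_tendsto_zero hlim
  have hx0 n := ne_zero_of_inXR ha hc hd (hX n)
  have hnonneg n : 0 ≤ |x n * fxR 1 c d (x n) (z n) + y n * fyR a (y n)| /
      (nrm2R (x n) (y n) * gradNormR a 1 c d (x n) (y n) (z n)) :=
    div_nonneg (abs_nonneg _) (mul_nonneg (nrm2R_nonneg _ _) (gradNormR_nonneg _ _ _ _ _ _ _))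
  rcases h with rfl | hdc
  · have hbound := ((hz.const_mul |(1 : ℝ) - c|).mul (hx.pow (c - 1))).add
      ((hx.pow (d - 1)).const_mul |(1 : ℝ) - d|)
    refine squeeze_zero hnonneg (fun n => abs_mul_fxR_add_mul_fyR_div_le_of_a_eq_one hc hd
      (hx0 n) (inXR_one_eq (hX n))) ?_
    rcases eq_or_ne d 1 with rfl | hd1
    · simpa using hbound
    · simpa [show d - 1 ≠ 0 by omega] using hbound
  · have hsecond : Tendsto (fun n => |(a : ℝ) - d| *
        (|x n| ^ d / (nrm2R (x n) (y n) * gradNormR a 1 c d (x n) (y n) (z n))))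
        atTop (nhds 0) := by
      rcases eq_or_ne a d with rfl | had
      · simp
      · simpa using (tendsto_abs_pow_div_of_ne ha hc hd hdc had hX hlim).const_mul |(a : ℝ) - d|
    refine squeeze_zero' (.of_forall hnonneg) ?_
      (by simpa using ((hz.const_mul |(a : ℝ) - c|).mul_const (2 / d : ℝ)).add hsecond)
    filter_upwards [eventually_near_origin c hd hlim] with n ⟨hx1, hz⟩
    exact abs_mul_fxR_add_mul_fyR_div_le_of_le ha hc hd hdc (hx0 n) hx1 hz (inXR_one_eq (hX n))

end Regularity

/-- For b = 1, Whitney (a)- and (b)-regularity coincide for y^a = z x^c + x^d in ℝ³,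
both being equivalent to (a = 1 or d ≤ c). -/
theorem whitney_a_iff_b_real_b_eq_one (a c d : ℕ) (ha : 0 < a) (hc : 0 < c) (hd : 0 < d) :
    (aRegR a 1 c d ↔ bRegR a 1 c d) ∧
      (aRegR a 1 c d ↔ (a = 1 ∨ d ≤ c)) ∧
      (bRegR a 1 c d ↔ (a = 1 ∨ d ≤ c)) := by
  have hA : aRegR a 1 c d ↔ (a = 1 ∨ d ≤ c) :=
    ⟨a_eq_one_or_le_of_aRegR ha hc, aRegR_of_a_eq_one_or_le ha hc hd⟩
  have hB : bRegR a 1 c d ↔ (a = 1 ∨ d ≤ c) :=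
    ⟨fun h => hA.1 h.1, fun h => ⟨hA.2 h, bpiR_of_a_eq_one_or_le ha hc hd h⟩⟩
  exact ⟨hA.trans hB.symm, hA, hB⟩
end
end

section
/- Let a, b, c, d be positive integers with a > 1, a odd, and d > c. Let g : ℝ² → ℝ be the function g(x,t) = (t^b·x^c + x^d)^{1/a}, i.e. g(x,t) is the unique real number y with y^a = t^b·x^c + x^d. Then g is continuously differentiable (C¹) on ℝ² if and only if a ≤ c, (a ≤ b or d·(a − b) < a·c), b is even, and d − c is even. -/
/-!
Write `n = d - c`, so that `g (x, t) ^ a = x ^ c * (t ^ b + x ^ n)`.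

If `b` and `n` are even, the cofactor `W = t ^ b + x ^ n` is nonnegative and vanishes only at
the origin, so `g = r(x) ^ c * W ^ (1/a)` with `r` the real `a`-th root. The factor `r(x) ^ c` is
`C¹` as soon as `a ≤ c` (its derivative is `(c/a) r(x) ^ (c - a)`), and off the origin the product
rule applies. Near the origin the terms of the partial derivatives involving `W ^ (1/a - 1)` are
bounded by multiples of `|r(x)| ^ q * W ^ β`; since `|r(x)| ^ (a n) ≤ W`, these tend to `0` when
`q + a n β > 0`, which for `∂ₜ g` is exactly `a n < b d`, the form taken by
`a ≤ b ∨ d (a - b) < a c` once the truncated subtraction is resolved.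

Conversely, if `φ` is differentiable and `φ ^ a = P` with `a > 1`, then `P' = 0` wherever `P = 0`.
At `-1` on the lines `x = 1` and `t = 1`, where `g ^ a` is `t ^ b + 1` and `x ^ c + x ^ d`, this
rules out odd `b` and odd `n`; and `g (x, 1) = O(x)` at `0` forces `x ^ c = O(x ^ a)`, i.e. `a ≤ c`.
Finally, differentiating `g ^ a` in `t` gives `a g ^ (a-1) ∂ₜ g = b t ^ (b-1) x ^ c`; along the
curve `(s ^ b, s ^ n)` this yields `(∂ₜ g) ^ a ≥ b ^ a / (a ^ a 2 ^ (a-1))` when `b d ≤ a n`,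
contradicting `∂ₜ g (0, 0) = 0`.
-/

open Filter Topology Asymptotics

theorem Odd.surjective_pow_real {a : ℕ} (ha : Odd a) : Function.Surjective fun x : ℝ => x ^ a := by
  intro y
  have ha0 : a ≠ 0 := ha.pos.ne'
  rcases le_total 0 y with hy | hy
  · exact ⟨y ^ (a⁻¹ : ℝ), Real.rpow_inv_natCast_pow hy ha0⟩
  · refine ⟨-(-y) ^ (a⁻¹ : ℝ), ?_⟩
    simp only [ha.neg_pow, Real.rpow_inv_natCast_pow (neg_nonneg.2 hy) ha0, neg_neg]

noncomputable def oddRoot {a : ℕ} (ha : Odd a) : ℝ ≃o ℝ :=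
  (ha.strictMono_pow.orderIsoOfSurjective _ ha.surjective_pow_real).symm

namespace oddRoot

variable {a : ℕ} (ha : Odd a)

@[simp]
theorem pow (y : ℝ) : oddRoot ha y ^ a = y :=
  StrictMono.orderIsoOfSurjective_self_symm_apply _ _ _ y

theorem eq_zero_iff {y : ℝ} : oddRoot ha y = 0 ↔ y = 0 := by
  rw [← pow ha y, pow_eq_zero_iff ha.pos.ne', pow]

@[simp]
theorem map_zero : oddRoot ha 0 = 0 := (eq_zero_iff ha).2 rfl

theorem tendsto_fst_nhds_zero : Tendsto (fun p : ℝ × ℝ => oddRoot ha p.1) (𝓝 0) (𝓝 0) := by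
  simpa using ((oddRoot ha).continuous.comp' continuous_fst).tendsto (0 : ℝ × ℝ)

theorem hasDerivAt {y : ℝ} (hy : y ≠ 0) :
    HasDerivAt (oddRoot ha) (a * oddRoot ha y ^ (a - 1))⁻¹ y := by
  refine HasDerivAt.of_local_left_inverse (oddRoot ha).continuous.continuousAt
    (hasDerivAt_pow a _) ?_ (.of_forall (pow ha))
  exact mul_ne_zero (by exact_mod_cast ha.pos.ne') (pow_ne_zero _ ((eq_zero_iff ha).not.2 hy))

theorem hasDerivAt_pow {c : ℕ} (hac : a ≤ c) (y : ℝ) :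
    HasDerivAt (fun y => oddRoot ha y ^ c) (c / a * oddRoot ha y ^ (c - a)) y := by
  refine hasDerivAt_of_hasDerivAt_of_ne' (x := 0) (g := fun y => c / a * oddRoot ha y ^ (c - a))
    (fun z hz => ?_) (by fun_prop) (by fun_prop) y
  refine ((hasDerivAt ha hz).pow c).congr_deriv ?_
  have hr : oddRoot ha z ≠ 0 := (eq_zero_iff ha).not.2 hz
  have ha0 : (a : ℝ) ≠ 0 := by exact_mod_cast ha.pos.ne'
  have hsplit : oddRoot ha z ^ (c - 1) = oddRoot ha z ^ (c - a) * oddRoot ha z ^ (a - 1) := by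
    rw [← pow_add]; congr 1; have := ha.pos; omega
  rw [hsplit]
  field_simp

end oddRoot

theorem tendsto_abs_pow_mul_rpow_nhds_zero {ι : Type*} {l : Filter ι} {u w : ι → ℝ} {q m : ℕ}
    {β : ℝ} (hu : Tendsto u l (𝓝 0)) (hw : Tendsto w l (𝓝 0)) (huw : ∀ i, |u i| ^ m ≤ w i)
    (hq : q ≠ 0) (hqβ : 0 < q + m * β) : Tendsto (fun i => |u i| ^ q * w i ^ β) l (𝓝 0) := by
  have hua : Tendsto (fun i => |u i|) l (𝓝 0) := by simpa using hu.abs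
  rcases le_or_gt 0 β with hβ | hβ
  · simpa [hq] using (hua.pow q).mul (hw.rpow_const (.inr hβ))
  have hbound : ∀ i, |u i| ^ q * w i ^ β ≤ |u i| ^ (q + m * β) := by
    intro i
    rcases eq_or_ne (u i) 0 with hui | hui
    · simp [hui, hq, Real.zero_rpow hqβ.ne']
    have hpos : 0 < |u i| := abs_pos.2 hui
    calc |u i| ^ q * w i ^ β ≤ |u i| ^ q * (|u i| ^ m) ^ β :=
          mul_le_mul_of_nonneg_left
            (Real.rpow_le_rpow_of_nonpos (by positivity) (huw i) hβ.le) (by positivity)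
      _ = |u i| ^ (q + m * β) := by
          rw [Real.rpow_add hpos, Real.rpow_natCast, ← Real.rpow_natCast _ m,
            ← Real.rpow_mul hpos.le]
  have hlim : Tendsto (fun i => |u i| ^ (q + m * β)) l (𝓝 0) := by
    simpa [Real.zero_rpow hqβ.ne'] using hua.rpow_const (.inr hqβ.le)
  refine squeeze_zero (fun i => ?_) hbound hlim
  have : 0 ≤ w i := (pow_nonneg (abs_nonneg _) m).trans (huw i)
  positivity

theorem pow_pred_le_rpow_of_pow_le {s w : ℝ} {b : ℕ} (hb : b ≠ 0) (hs : 0 ≤ s) (h : s ^ b ≤ w) :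
    s ^ (b - 1) ≤ w ^ (((b : ℝ) - 1) / b) := by
  have hb1 : ((b - 1 : ℕ) : ℝ) = b - 1 := by push_cast [Nat.one_le_iff_ne_zero.2 hb]; ring
  calc s ^ (b - 1) = (s ^ b) ^ (((b : ℝ) - 1) / b) := by
        rw [← Real.rpow_natCast _ (b - 1), ← Real.rpow_natCast s b, ← Real.rpow_mul hs, hb1]
        field_simp
    _ ≤ _ := Real.rpow_le_rpow (by positivity) h
        (div_nonneg (by rw [← hb1]; positivity) (by positivity))

theorem HasFDerivAt.mul_of_tendsto_zero {E : Type*} [NormedAddCommGroup E] [NormedSpace ℝ E]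
    {φ h : E → ℝ} {φ' : E →L[ℝ] ℝ} {x₀ : E} (hφ : HasFDerivAt φ φ' x₀) (hφ0 : φ x₀ = 0)
    (hh : Tendsto h (𝓝 x₀) (𝓝 0)) : HasFDerivAt (fun x => φ x * h x) (0 : E →L[ℝ] ℝ) x₀ := by
  have hO : φ =O[𝓝 x₀] fun x => ‖x - x₀‖ := by
    simpa [hφ0] using hφ.isBigO_sub.norm_right
  have ho : (fun x => φ x * h x) =o[𝓝 x₀] fun x => ‖x - x₀‖ := by
    simpa using hO.mul_isLittleO ((isLittleO_one_iff ℝ).2 hh)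
  rw [hasFDerivAt_iff_isLittleO]
  simpa [hφ0] using isLittleO_norm_right.1 ho

theorem HasDerivAt.eq_of_pow_eq {φ P : ℝ → ℝ} {φ' P' x : ℝ} {a : ℕ} (hφ : HasDerivAt φ φ' x)
    (hP : HasDerivAt P P' x) (h : ∀ y, φ y ^ a = P y) : P' = a * φ x ^ (a - 1) * φ' :=
  hP.unique (by simpa only [h] using hφ.fun_pow a)

theorem HasDerivAt.eq_zero_of_pow_eq {φ P : ℝ → ℝ} {P' x : ℝ} {a : ℕ} (hP : HasDerivAt P P' x)
    (hφ : DifferentiableAt ℝ φ x) (h : ∀ y, φ y ^ a = P y) (ha : 1 < a) (hx : P x = 0) :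
    P' = 0 := by
  have hφx : φ x = 0 := (pow_eq_zero_iff (by omega : a ≠ 0)).1 ((h x).trans hx)
  simp [hφ.hasDerivAt.eq_of_pow_eq hP h, hφx, show a - 1 ≠ 0 by omega]

theorem DifferentiableAt.hasDerivAt_comp_prodMk_left {g : ℝ × ℝ → ℝ} {x t : ℝ}
    (hg : DifferentiableAt ℝ g (x, t)) :
    HasDerivAt (fun s => g (x, s)) (fderiv ℝ g (x, t) (0, 1)) t :=
  hg.hasFDerivAt.comp_hasDerivAt t ((hasDerivAt_const t x).prodMk (hasDerivAt_id t))

section Necessity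

variable {a b c n : ℕ}

theorem le_of_pow_eq_pow_add_pow {φ : ℝ → ℝ} (hφ : DifferentiableAt ℝ φ 0)
    (h : ∀ x, φ x ^ a = x ^ c + x ^ (c + n)) (hc : c ≠ 0) (hn : n ≠ 0) : a ≤ c := by
  by_contra! hca
  have hφ0 : φ 0 = 0 := (pow_eq_zero_iff (by omega : a ≠ 0)).1 (by rw [h]; simp [hc, hn])
  have hφO : φ =O[𝓝 0] fun x => x := by simpa [hφ0] using hφ.hasDerivAt.isBigO_sub
  have hO : (fun x : ℝ => x ^ c + x ^ (c + n)) =O[𝓝 0] fun x => x ^ a := by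
    simpa [h] using hφO.pow a
  have hc_O : (fun x : ℝ => x ^ c) =O[𝓝 0] fun x => x ^ c + x ^ (c + n) :=
    (isLittleO_pow_pow (by omega : c < c + n)).right_isBigO_add'
  have hne : ∃ᶠ x in 𝓝 (0 : ℝ), x ^ c ≠ 0 :=
    (eventually_nhdsWithin_of_forall (s := {0}ᶜ) fun x (hx : x ≠ 0) =>
      pow_ne_zero c hx).frequently.filter_mono nhdsWithin_le_nhds
  exact isLittleO_irrefl hne ((hc_O.trans hO).trans_isLittleO (isLittleO_pow_pow hca))

theorem even_of_pow_eq_pow_add_pow {φ : ℝ → ℝ} (hφ : DifferentiableAt ℝ φ (-1))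
    (h : ∀ x, φ x ^ a = x ^ c + x ^ (c + n)) (ha : 1 < a) : Even n := by
  by_contra hn
  rw [Nat.not_even_iff_odd] at hn
  have h0 : (1 : ℝ) + (-1) ^ n = 0 := by rw [hn.neg_one_pow]; norm_num
  have hP := (hasDerivAt_pow c (-1 : ℝ)).fun_mul ((hasDerivAt_pow n (-1 : ℝ)).const_add 1)
  have := hP.eq_zero_of_pow_eq hφ (fun x => by rw [h, pow_add]; ring) ha (by simp [h0])
  rw [h0, (Nat.Odd.sub_odd hn odd_one).neg_one_pow] at this
  simp [hn.pos.ne'] at this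

theorem pow_le_mul_fderiv_pow_of_pow_eq {g : ℝ × ℝ → ℝ} (hdiff : Differentiable ℝ g)
    (hg : ∀ x t, g (x, t) ^ a = t ^ b * x ^ c + x ^ (c + n)) (ha : a ≠ 0) (hb : b ≠ 0)
    (hle : b * (c + n) ≤ a * n) {s : ℝ} (hs0 : 0 < s) (hs1 : s ≤ 1) :
    (b : ℝ) ^ a ≤ a ^ a * 2 ^ (a - 1) * fderiv ℝ g (s ^ b, s ^ n) (0, 1) ^ a := by
  set D := fderiv ℝ g (s ^ b, s ^ n) (0, 1)
  have hderiv : a * g (s ^ b, s ^ n) ^ (a - 1) * D = b * (s ^ n) ^ (b - 1) * (s ^ b) ^ c :=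
    ((hdiff _).hasDerivAt_comp_prodMk_left.eq_of_pow_eq
      (((hasDerivAt_pow b _).mul_const _).add_const _) (hg _)).symm
  have hga : g (s ^ b, s ^ n) ^ a = 2 * s ^ (b * (c + n)) := by rw [hg]; ring
  have hid : a ^ a * 2 ^ (a - 1) * D ^ a * s ^ (b * (c + n) * (a - 1)) =
      b ^ a * s ^ (a * (n * (b - 1) + b * c)) := by
    have := congrArg (· ^ a) hderiv
    simp only [mul_pow, ← pow_mul, mul_comm (a - 1) a] at this
    rw [pow_mul, hga] at this
    linear_combination this
  have hexp : a * (n * (b - 1) + b * c) ≤ b * (c + n) * (a - 1) := by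
    obtain ⟨a, rfl⟩ := Nat.exists_eq_add_one_of_ne_zero ha
    obtain ⟨b, rfl⟩ := Nat.exists_eq_add_one_of_ne_zero hb
    simp only [Nat.add_sub_cancel]
    nlinarith [hle]
  have hmono : (b : ℝ) ^ a * s ^ (b * (c + n) * (a - 1)) ≤
      b ^ a * s ^ (a * (n * (b - 1) + b * c)) :=
    mul_le_mul_of_nonneg_left (pow_le_pow_of_le_one hs0.le hs1 hexp) (by positivity)
  rw [← hid] at hmono
  exact le_of_mul_le_mul_right hmono (by positivity)

theorem mul_lt_of_contDiff_of_pow_eq {g : ℝ × ℝ → ℝ} (hC : ContDiff ℝ 1 g)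
    (hg : ∀ x t, g (x, t) ^ a = t ^ b * x ^ c + x ^ (c + n)) (ha : a ≠ 0) (hb : b ≠ 0)
    (hc : c ≠ 0) : a * n < b * (c + n) := by
  by_contra! hle
  have hn : n ≠ 0 := by rintro rfl; simp at hle; omega
  have hdiff := hC.differentiable one_ne_zero
  set D : ℝ × ℝ → ℝ := fun p => fderiv ℝ g p (0, 1)
  have hD : Continuous D := by
    have := (contDiff_one_iff_fderiv.1 hC).2
    fun_prop
  have hD0 : D (0, 0) = 0 := by
    have hg0 : (fun t => g (0, t)) = fun _ => 0 := by
      funext t; exact pow_eq_zero_iff ha |>.1 (by simp [hg, hc])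
    have h00 := (hdiff (0, 0)).hasDerivAt_comp_prodMk_left
    rw [hg0] at h00
    exact h00.unique (hasDerivAt_const _ _)
  set K : ℝ := a ^ a * 2 ^ (a - 1)
  have hlim : Tendsto (fun s : ℝ => K * D (s ^ b, s ^ n) ^ a) (𝓝[>] 0) (𝓝 0) := by
    have : Continuous fun s : ℝ => K * D (s ^ b, s ^ n) ^ a := by fun_prop
    simpa [hb, hn, hD0, ha] using (this.tendsto 0).mono_left nhdsWithin_le_nhds
  obtain ⟨s, hs, hs0, hs1⟩ := ((hlim.eventually (gt_mem_nhds (by positivity : (0 : ℝ) < b ^ a))).and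
    (Ioc_mem_nhdsGT zero_lt_one)).exists
  exact (pow_le_mul_fderiv_pow_of_pow_eq hdiff hg ha hb hle hs0 hs1).not_gt hs

end Necessity

def cofactor (b n : ℕ) (p : ℝ × ℝ) : ℝ := p.2 ^ b + p.1 ^ n

section Sufficiency

variable {a b c n : ℕ}

theorem continuous_cofactor : Continuous (cofactor b n) := by
  unfold cofactor; fun_prop

theorem tendsto_cofactor_nhds_zero (hb : b ≠ 0) (hn : n ≠ 0) :
    Tendsto (cofactor b n) (𝓝 0) (𝓝 0) := by
  simpa [cofactor, hb, hn] using (continuous_cofactor (b := b) (n := n)).tendsto 0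

theorem pow_abs_fst_le_cofactor (hb : Even b) (hn : Even n) (p : ℝ × ℝ) :
    |p.1| ^ n ≤ cofactor b n p := by
  rw [hn.pow_abs]; exact le_add_of_nonneg_left (hb.pow_nonneg _)

theorem pow_abs_snd_le_cofactor (hb : Even b) (hn : Even n) (p : ℝ × ℝ) :
    |p.2| ^ b ≤ cofactor b n p := by
  rw [hb.pow_abs]; exact le_add_of_nonneg_right (hn.pow_nonneg _)

theorem cofactor_nonneg (hb : Even b) (hn : Even n) (p : ℝ × ℝ) : 0 ≤ cofactor b n p :=
  (pow_nonneg (abs_nonneg _) n).trans (pow_abs_fst_le_cofactor hb hn p)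

theorem cofactor_pos_of_fst_ne_zero (hb : Even b) (hn : Even n) {p : ℝ × ℝ} (hx : p.1 ≠ 0) :
    0 < cofactor b n p :=
  (pow_pos (abs_pos.2 hx) n).trans_le (pow_abs_fst_le_cofactor hb hn p)

theorem cofactor_pos (hb : Even b) (hn : Even n) {p : ℝ × ℝ} (hp : p ≠ 0) :
    0 < cofactor b n p := by
  rcases eq_or_ne p.1 0 with hx | hx
  · have ht : p.2 ≠ 0 := fun ht => hp (Prod.ext hx ht)
    exact (pow_pos (abs_pos.2 ht) b).trans_le (pow_abs_snd_le_cofactor hb hn p)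
  · exact cofactor_pos_of_fst_ne_zero hb hn hx

theorem hasFDerivAt_cofactor (p : ℝ × ℝ) :
    HasFDerivAt (cofactor b n)
      ((n * p.1 ^ (n - 1)) • ContinuousLinearMap.fst ℝ ℝ ℝ +
        (b * p.2 ^ (b - 1)) • ContinuousLinearMap.snd ℝ ℝ ℝ) p := by
  rw [add_comm]
  exact ((hasDerivAt_pow b p.2).comp_hasFDerivAt p hasFDerivAt_snd).add
    ((hasDerivAt_pow n p.1).comp_hasFDerivAt p hasFDerivAt_fst)

theorem pow_abs_oddRoot_le_cofactor (ha : Odd a) (hb : Even b) (hn : Even n) (p : ℝ × ℝ) :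
    |oddRoot ha p.1| ^ (a * n) ≤ cofactor b n p := by
  rw [pow_mul, ← abs_pow, oddRoot.pow]
  exact pow_abs_fst_le_cofactor hb hn p

theorem eq_oddRoot_mul_cofactor_rpow (ha : Odd a) (hb : Even b) (hn : Even n) {g : ℝ × ℝ → ℝ}
    (hg : ∀ x t, g (x, t) ^ a = t ^ b * x ^ c + x ^ (c + n)) :
    g = fun p => oddRoot ha p.1 ^ c * cofactor b n p ^ (a : ℝ)⁻¹ := by
  funext p
  refine ha.strictMono_pow.injective ?_
  rw [mul_pow, ← pow_mul, mul_comm c a, pow_mul, oddRoot.pow,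
    Real.rpow_inv_natCast_pow (cofactor_nonneg hb hn p) ha.pos.ne', hg, cofactor]
  ring

variable (b c n) (ha : Odd a)

noncomputable def rootPartialFst (p : ℝ × ℝ) : ℝ :=
  c / a * oddRoot ha p.1 ^ (c - a) * cofactor b n p ^ (a : ℝ)⁻¹ +
    oddRoot ha p.1 ^ c * ((a : ℝ)⁻¹ * (n * p.1 ^ (n - 1)) * cofactor b n p ^ ((a : ℝ)⁻¹ - 1))

noncomputable def rootPartialSnd (p : ℝ × ℝ) : ℝ :=
  oddRoot ha p.1 ^ c * ((a : ℝ)⁻¹ * (b * p.2 ^ (b - 1)) * cofactor b n p ^ ((a : ℝ)⁻¹ - 1))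

variable {b c n}

theorem rootPartialFst_zero (hb : b ≠ 0) (hc : c ≠ 0) (hn : n ≠ 0) :
    rootPartialFst b c n ha 0 = 0 := by
  simp [rootPartialFst, cofactor, hb, hn, hc, ha.pos.ne']

theorem rootPartialSnd_zero (hc : c ≠ 0) : rootPartialSnd b c n ha 0 = 0 := by
  simp [rootPartialSnd, hc]

theorem hasFDerivAt_oddRoot_mul_cofactor_rpow_of_pos (hac : a ≤ c) {p : ℝ × ℝ}
    (hp : 0 < cofactor b n p) :
    HasFDerivAt (fun q => oddRoot ha q.1 ^ c * cofactor b n q ^ (a : ℝ)⁻¹)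
      (rootPartialFst b c n ha p • ContinuousLinearMap.fst ℝ ℝ ℝ +
        rootPartialSnd b c n ha p • ContinuousLinearMap.snd ℝ ℝ ℝ) p := by
  have hρ := (oddRoot.hasDerivAt_pow ha hac p.1).comp_hasFDerivAt p
    (hasFDerivAt_fst (𝕜 := ℝ) (p := p))
  have hW := (hasFDerivAt_cofactor (b := b) (n := n) p).rpow_const (p := (a : ℝ)⁻¹) (.inl hp.ne')
  refine (hρ.mul hW).congr_fderiv (ContinuousLinearMap.ext fun z => ?_)
  simp only [add_apply, smul_apply, ContinuousLinearMap.coe_fst', ContinuousLinearMap.coe_snd',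
    smul_eq_mul, Function.comp_apply, rootPartialFst, rootPartialSnd]
  ring

theorem hasFDerivAt_oddRoot_mul_cofactor_rpow (hac : a ≤ c) (hb : Even b) (hn : Even n)
    (hb0 : b ≠ 0) (hn0 : n ≠ 0) (p : ℝ × ℝ) :
    HasFDerivAt (fun q => oddRoot ha q.1 ^ c * cofactor b n q ^ (a : ℝ)⁻¹)
      (rootPartialFst b c n ha p • ContinuousLinearMap.fst ℝ ℝ ℝ +
        rootPartialSnd b c n ha p • ContinuousLinearMap.snd ℝ ℝ ℝ) p := by
  rcases eq_or_ne p 0 with rfl | hp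
  · have hc : c ≠ 0 := by have := ha.pos; omega
    rw [rootPartialFst_zero ha hb0 hc hn0, rootPartialSnd_zero ha hc, zero_smul, zero_smul,
      add_zero]
    have hρ := (oddRoot.hasDerivAt_pow ha hac 0).comp_hasFDerivAt (0 : ℝ × ℝ)
      (hasFDerivAt_fst (𝕜 := ℝ) (p := (0 : ℝ × ℝ)))
    refine hρ.mul_of_tendsto_zero (by simp [hc]) ?_
    simpa [ha.pos.ne'] using
      (tendsto_cofactor_nhds_zero hb0 hn0).rpow_const (p := (a : ℝ)⁻¹) (.inr (by positivity))
  · exact hasFDerivAt_oddRoot_mul_cofactor_rpow_of_pos ha hac (cofactor_pos hb hn hp)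

theorem tendsto_rootPartialFst_nhds_zero (hac : a ≤ c) (hb : Even b) (hn : Even n)
    (hb0 : b ≠ 0) (hn0 : n ≠ 0) : Tendsto (rootPartialFst b c n ha) (𝓝 0) (𝓝 0) := by
  have hW := tendsto_cofactor_nhds_zero hb0 hn0
  have hregular : Tendsto (fun p : ℝ × ℝ =>
      c / a * oddRoot ha p.1 ^ (c - a) * cofactor b n p ^ (a : ℝ)⁻¹) (𝓝 0) (𝓝 0) := by
    simpa [ha.pos.ne'] using ((oddRoot.tendsto_fst_nhds_zero ha).pow (c - a)).const_mul (c / a : ℝ)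
      |>.mul (hW.rpow_const (p := (a : ℝ)⁻¹) (.inr (by positivity)))
  have hnorm : ∀ p : ℝ × ℝ, ‖oddRoot ha p.1 ^ c *
      ((a : ℝ)⁻¹ * (n * p.1 ^ (n - 1)) * cofactor b n p ^ ((a : ℝ)⁻¹ - 1))‖ =
      (a : ℝ)⁻¹ * n *
        (|oddRoot ha p.1| ^ (c + a * (n - 1)) * cofactor b n p ^ ((a : ℝ)⁻¹ - 1)) := by
    intro p
    have hx : |p.1| = |oddRoot ha p.1| ^ a := by rw [← abs_pow, oddRoot.pow]
    simp only [Real.norm_eq_abs, abs_mul, abs_pow, hx, ← pow_mul, pow_add, abs_inv, Nat.abs_cast,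
      abs_of_nonneg (Real.rpow_nonneg (cofactor_nonneg hb hn p) _)]
    ring
  have hexp : 0 < ((c + a * (n - 1) : ℕ) : ℝ) + (a * n : ℕ) * ((a : ℝ)⁻¹ - 1) := by
    have ha0 : (a : ℝ) ≠ 0 := by exact_mod_cast ha.pos.ne'
    have hcn : (a : ℝ) < c + n := by exact_mod_cast (show a < c + n by omega)
    have : ((c + a * (n - 1) : ℕ) : ℝ) + (a * n : ℕ) * ((a : ℝ)⁻¹ - 1) = c + n - a := by
      push_cast [Nat.one_le_iff_ne_zero.2 hn0]
      field_simp
      ring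
    linarith
  have hsingular := tendsto_abs_pow_mul_rpow_nhds_zero (oddRoot.tendsto_fst_nhds_zero ha) hW
    (pow_abs_oddRoot_le_cofactor ha hb hn) (by have := ha.pos; omega) hexp
  rw [tendsto_zero_iff_norm_tendsto_zero] at hregular ⊢
  refine squeeze_zero (fun _ => norm_nonneg _) (fun p => norm_add_le _ _) ?_
  simpa [hnorm] using hregular.add (hsingular.const_mul ((a : ℝ)⁻¹ * n))

theorem norm_rootPartialSnd_le (hc : c ≠ 0) (hb : Even b) (hn : Even n) (hb0 : b ≠ 0)
    (p : ℝ × ℝ) : ‖rootPartialSnd b c n ha p‖ ≤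
      (a : ℝ)⁻¹ * b * (|oddRoot ha p.1| ^ c * cofactor b n p ^ ((a : ℝ)⁻¹ - (b : ℝ)⁻¹)) := by
  rcases eq_or_ne p.1 0 with hx | hx
  · have := Real.rpow_nonneg (cofactor_nonneg hb hn p) ((a : ℝ)⁻¹ - (b : ℝ)⁻¹)
    rw [rootPartialSnd, hx, oddRoot.map_zero, zero_pow hc, zero_mul, norm_zero]
    positivity
  have hW := cofactor_pos_of_fst_ne_zero hb hn hx
  have hsplit : cofactor b n p ^ ((a : ℝ)⁻¹ - (b : ℝ)⁻¹) =
      cofactor b n p ^ (((b : ℝ) - 1) / b) * cofactor b n p ^ ((a : ℝ)⁻¹ - 1) := by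
    rw [← Real.rpow_add hW]
    congr 1
    field_simp
    ring
  have hWnn : 0 ≤ cofactor b n p ^ ((a : ℝ)⁻¹ - 1) := Real.rpow_nonneg hW.le _
  calc ‖rootPartialSnd b c n ha p‖ = (a : ℝ)⁻¹ * b *
        (|oddRoot ha p.1| ^ c * (|p.2| ^ (b - 1) * cofactor b n p ^ ((a : ℝ)⁻¹ - 1))) := by
        simp only [rootPartialSnd, Real.norm_eq_abs, abs_mul, abs_pow, abs_of_nonneg hWnn,
          abs_inv, Nat.abs_cast]
        ring
    _ ≤ _ := by
        rw [hsplit]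
        gcongr
        exact pow_pred_le_rpow_of_pow_le hb0 (abs_nonneg _) (pow_abs_snd_le_cofactor hb hn p)

theorem tendsto_rootPartialSnd_nhds_zero (hc : c ≠ 0) (hb : Even b) (hn : Even n)
    (hn0 : n ≠ 0) (hcond : a * n < b * (c + n)) :
    Tendsto (rootPartialSnd b c n ha) (𝓝 0) (𝓝 0) := by
  have hb0 : b ≠ 0 := by rintro rfl; simp at hcond
  have hexp : 0 < (c : ℝ) + (a * n : ℕ) * ((a : ℝ)⁻¹ - (b : ℝ)⁻¹) := by
    have ha0 : (a : ℝ) ≠ 0 := by exact_mod_cast ha.pos.ne'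
    have hbpos : (0 : ℝ) < b := by exact_mod_cast Nat.pos_of_ne_zero hb0
    have hcond' : (a : ℝ) * n < b * (c + n) := by exact_mod_cast hcond
    have : (c : ℝ) + (a * n : ℕ) * ((a : ℝ)⁻¹ - (b : ℝ)⁻¹) = (b * (c + n) - a * n) / b := by
      push_cast
      field_simp
      ring
    rw [this]
    exact div_pos (by linarith) hbpos
  have hbound := tendsto_abs_pow_mul_rpow_nhds_zero (oddRoot.tendsto_fst_nhds_zero ha)
    (tendsto_cofactor_nhds_zero hb0 hn0) (pow_abs_oddRoot_le_cofactor ha hb hn) hc hexp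
  exact squeeze_zero_norm (norm_rootPartialSnd_le ha hc hb hn hb0)
    (by simpa using hbound.const_mul ((a : ℝ)⁻¹ * b))

theorem continuousAt_rootPartialFst (hb : Even b) (hn : Even n) {p : ℝ × ℝ} (hp : p ≠ 0) :
    ContinuousAt (rootPartialFst b c n ha) p := by
  have hW := (continuous_cofactor (b := b) (n := n)).continuousAt (x := p)
  have h1 := hW.rpow_const (p := (a : ℝ)⁻¹) (.inl (cofactor_pos hb hn hp).ne')
  have h2 := hW.rpow_const (p := (a : ℝ)⁻¹ - 1) (.inl (cofactor_pos hb hn hp).ne')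
  unfold rootPartialFst
  fun_prop

theorem continuousAt_rootPartialSnd (hb : Even b) (hn : Even n) {p : ℝ × ℝ} (hp : p ≠ 0) :
    ContinuousAt (rootPartialSnd b c n ha) p := by
  have hW := ((continuous_cofactor (b := b) (n := n)).continuousAt (x := p)).rpow_const
    (p := (a : ℝ)⁻¹ - 1) (.inl (cofactor_pos hb hn hp).ne')
  unfold rootPartialSnd
  fun_prop

end Sufficiency

theorem contDiff_of_pow_eq {a b c n : ℕ} (ha : Odd a) (hac : a ≤ c) (hb : Even b) (hn : Even n)
    (hn0 : n ≠ 0) (hcond : a * n < b * (c + n)) {g : ℝ × ℝ → ℝ}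
    (hg : ∀ x t, g (x, t) ^ a = t ^ b * x ^ c + x ^ (c + n)) : ContDiff ℝ 1 g := by
  have hb0 : b ≠ 0 := by rintro rfl; simp at hcond
  have hc : c ≠ 0 := by have := ha.pos; omega
  have hFst : Continuous (rootPartialFst b c n ha) := continuous_iff_continuousAt.2 fun p => by
    rcases eq_or_ne p 0 with rfl | hp
    · simpa [ContinuousAt, rootPartialFst_zero ha hb0 hc hn0] using
        tendsto_rootPartialFst_nhds_zero ha hac hb hn hb0 hn0
    · exact continuousAt_rootPartialFst ha hb hn hp
  have hSnd : Continuous (rootPartialSnd b c n ha) := continuous_iff_continuousAt.2 fun p => by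
    rcases eq_or_ne p 0 with rfl | hp
    · simpa [ContinuousAt, rootPartialSnd_zero ha hc] using
        tendsto_rootPartialSnd_nhds_zero ha hc hb hn hn0 hcond
    · exact continuousAt_rootPartialSnd ha hb hn hp
  rw [eq_oddRoot_mul_cofactor_rpow ha hb hn hg]
  exact contDiff_one_iff_hasFDerivAt.2 ⟨_, (hFst.smul continuous_const).add
    (hSnd.smul continuous_const), hasFDerivAt_oddRoot_mul_cofactor_rpow ha hac hb hn hb0 hn0⟩

theorem le_or_mul_tsub_lt_iff {a b c n : ℕ} (hb : 0 < b) (hc : 0 < c) :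
    (a ≤ b ∨ (c + n) * (a - b) < a * c) ↔ a * n < b * (c + n) := by
  rcases le_or_gt a b with hab | hab
  · simp only [hab, true_or, true_iff]
    nlinarith [Nat.mul_le_mul_right n hab, Nat.mul_pos hb hc]
  · obtain ⟨k, rfl⟩ := Nat.exists_eq_add_of_lt hab
    simp only [show ¬ b + k + 1 ≤ b by omega, false_or, show b + k + 1 - b = k + 1 by omega]
    constructor <;> intro h <;> nlinarith [h]

theorem c1_root_characterisation_general (a b c d : ℕ) (hb : 0 < b) (hc : 0 < c)
    (ha1 : 1 < a) (haodd : Odd a) (hdc : c < d)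
    (g : ℝ × ℝ → ℝ)
    (hg : ∀ x t : ℝ, g (x, t) ^ a = t ^ b * x ^ c + x ^ d) :
    ContDiff ℝ 1 g ↔
      (a ≤ c ∧ (a ≤ b ∨ d * (a - b) < a * c) ∧ Even b ∧ Even (d - c)) := by
  obtain ⟨n, rfl⟩ := Nat.exists_eq_add_of_le hdc.le
  have hn : n ≠ 0 := by omega
  rw [Nat.add_sub_cancel_left, le_or_mul_tsub_lt_iff hb hc]
  constructor
  · intro hC
    have hdiff := hC.differentiable one_ne_zero
    exact ⟨le_of_pow_eq_pow_add_pow (φ := fun x => g (x, 1)) (c := c) (by fun_prop)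
        (fun x => by simp [hg]) hc.ne' hn,
      mul_lt_of_contDiff_of_pow_eq hC hg (by omega) hb.ne' hc.ne',
      even_of_pow_eq_pow_add_pow (φ := fun t => g (1, t)) (c := 0) (by fun_prop)
        (fun t => by simp [hg, add_comm]) ha1,
      even_of_pow_eq_pow_add_pow (φ := fun x => g (x, 1)) (c := c) (by fun_prop)
        (fun x => by simp [hg]) ha1⟩
  · rintro ⟨hac, hcond, hbe, hne⟩
    exact contDiff_of_pow_eq haodd hac hbe hne hn hcond hg

/-- For a odd, a > 1 and d > c, the real a-th root g(x,t) = (t^b·x^c + x^d)^{1/a}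
(characterised by g(x,t)^a = t^b·x^c + x^d) is C¹ on ℝ² if and only if
a ≤ c, (a ≤ b or d·(a−b) < a·c), b is even and d − c is even. -/
theorem c1_root_characterisation (a b c d : ℕ) (ha : 0 < a) (hb : 0 < b) (hc : 0 < c)
    (hd : 0 < d) (ha1 : 1 < a) (haodd : Odd a) (hdc : c < d)
    (g : ℝ × ℝ → ℝ)
    (hg : ∀ x t : ℝ, g (x, t) ^ a = t ^ b * x ^ c + x ^ d) :
    ContDiff ℝ 1 g ↔
      (a ≤ c ∧ (a ≤ b ∨ d * (a - b) < a * c) ∧ Even b ∧ Even (d - c)) :=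
  c1_root_characterisation_general a b c d hb hc ha1 haodd hdc g hg
end
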